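/- arXiv:1602.03208 — 4 statements merged into one kernel-verified Lean document; each statement's English description precedes it below -/
import Mathlib

section
/- Let g : ℕ → ℕ be a computable nondecreasing function such that ∑_n 2^{−g(n)} diverges. Then there exists a computable nondecreasing function f : ℕ → ℕ such that lim_n (f(n) − g(n)) = ∞ and ∑_n 2^{−f(n)} diverges. -/
open Filter Finset

/-- `Nat.log 2` is primitive recursive. -/
private lemma primrec_log2 : Primrec (Nat.log 2) := by
  have hpow : Primrec₂ ((· ^ ·) : ℕ → ℕ → ℕ) := Primrec₂.unpaired'.1 Nat.Primrec.pow
  have key : ∀ m n : ℕ,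
      (Nat.rec 0 (fun y ih => if 2 ^ (y + 1) ≤ m then ih + 1 else ih) n : ℕ)
        = min n (Nat.log 2 m) := by
    intro m n
    induction n with
    | zero => simp
    | succ n ih =>
      have hP : (2 ^ (n + 1) ≤ m) ↔ n < Nat.log 2 m := by
        rcases eq_or_ne m 0 with rfl | hm
        · rw [Nat.log_zero_right]
          have hpos : 0 < 2 ^ (n + 1) := Nat.two_pow_pos (n + 1)
          exact iff_of_false (by omega) (by omega)
        · rw [← Nat.le_log_iff_pow_le (b := 2) (by norm_num) hm]
          omega
      by_cases h : 2 ^ (n + 1) ≤ m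
      · have := hP.1 h
        simp only [h, if_true]
        rw [ih]
        omega
      · have : ¬ n < Nat.log 2 m := fun hlt => h (hP.2 hlt)
        simp only [h, if_false]
        rw [ih]
        omega
  have hrec : Primrec fun m : ℕ =>
      Nat.rec (motive := fun _ => ℕ) 0 (fun y IH =>
        (fun (a : ℕ) (p : ℕ × ℕ) => if 2 ^ (p.1 + 1) ≤ a then p.2 + 1 else p.2) m (y, IH))
        (id m) := by
    refine Primrec.nat_rec'
        (h := fun (a : ℕ) (p : ℕ × ℕ) => if 2 ^ (p.1 + 1) ≤ a then p.2 + 1 else p.2)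
        Primrec.id (Primrec.const 0) ?_
    have hc : PrimrecPred fun q : ℕ × ℕ × ℕ => 2 ^ (q.2.1 + 1) ≤ q.1 :=
      Primrec.nat_le.comp
        (hpow.comp (Primrec.const 2) (Primrec.succ.comp (Primrec.fst.comp Primrec.snd)))
        Primrec.fst
    exact (Primrec.ite hc (Primrec.succ.comp (Primrec.snd.comp Primrec.snd))
      (Primrec.snd.comp Primrec.snd)).to₂
  exact hrec.of_eq fun m => by
    show (Nat.rec 0 (fun y ih => if 2 ^ (y + 1) ≤ m then ih + 1 else ih) m : ℕ) = Nat.log 2 m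
    rw [key]
    exact min_eq_right (Nat.log_le_self 2 m)

/-- Auxiliary accumulator: `myT g n = ∑_{k ≤ n} 2^(g n - g k)` (via a recurrence). -/
private def myT (g : ℕ → ℕ) (n : ℕ) : ℕ :=
  Nat.rec 1 (fun y IH => 2 ^ (g (y + 1) - g y) * IH + 1) n

private lemma myT_zero (g : ℕ → ℕ) : myT g 0 = 1 := rfl

private lemma myT_succ (g : ℕ → ℕ) (n : ℕ) :
    myT g (n + 1) = 2 ^ (g (n + 1) - g n) * myT g n + 1 := rfl

private lemma computable_myT {g : ℕ → ℕ} (hg : Computable g) : Computable (myT g) := by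
  have hpow : Computable₂ ((· ^ ·) : ℕ → ℕ → ℕ) :=
    (Primrec₂.unpaired'.1 Nat.Primrec.pow).to_comp
  have hsub : Computable₂ ((· - ·) : ℕ → ℕ → ℕ) := Primrec.nat_sub.to_comp
  have hmul : Computable₂ ((· * ·) : ℕ → ℕ → ℕ) := Primrec.nat_mul.to_comp
  have hadd : Computable₂ ((· + ·) : ℕ → ℕ → ℕ) := Primrec.nat_add.to_comp
  have hun : Computable fun q : ℕ × ℕ × ℕ =>
      2 ^ (g (q.2.1 + 1) - g q.2.1) * q.2.2 + 1 := by
    have h1 : Computable fun q : ℕ × ℕ × ℕ => g (q.2.1 + 1) :=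
      hg.comp (Primrec.succ.to_comp.comp (Computable.fst.comp Computable.snd))
    have h2 : Computable fun q : ℕ × ℕ × ℕ => g q.2.1 :=
      hg.comp (Computable.fst.comp Computable.snd)
    have h3 : Computable fun q : ℕ × ℕ × ℕ => 2 ^ (g (q.2.1 + 1) - g q.2.1) :=
      hpow.comp (Computable.const 2) (hsub.comp h1 h2)
    exact hadd.comp (hmul.comp h3 (Computable.snd.comp Computable.snd)) (Computable.const 1)
  have hh : Computable₂ fun (_ : ℕ) (p : ℕ × ℕ) =>
      2 ^ (g (p.1 + 1) - g p.1) * p.2 + 1 := Computable.to₂ hun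
  exact (Computable.nat_rec Computable.id (Computable.const 1) hh).of_eq fun n => rfl

/-- Space lemma: if `g` is computable, nondecreasing and `∑ 2^(-g n)` diverges, then
there is a computable nondecreasing `f` with `lim (f n - g n) = ∞` and `∑ 2^(-f n)`
still divergent. -/
theorem stmt13 (g : ℕ → ℕ) (hg : Computable g) (hmono : Monotone g)
    (hdiv : ¬ Summable (fun n : ℕ => (2 : ℝ) ^ (-(g n : ℤ)))) :
    ∃ f : ℕ → ℕ, Computable f ∧ Monotone f ∧
      Filter.Tendsto (fun n : ℕ => (f n : ℤ) - (g n : ℤ)) Filter.atTop Filter.atTop ∧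
      ¬ Summable (fun n : ℕ => (2 : ℝ) ^ (-(f n : ℤ))) := by
  classical
  set a : ℕ → ℝ := fun n => (2 : ℝ) ^ (-(g n : ℤ)) with ha
  set S : ℕ → ℝ := fun n => ∑ k ∈ range n, a k with hS
  have ha_pos : ∀ n, 0 < a n := fun n => by rw [ha]; positivity
  have ha_nonneg : ∀ n, 0 ≤ a n := fun n => (ha_pos n).le
  have hS_nonneg : ∀ n, 0 ≤ S n := fun n => Finset.sum_nonneg fun k _ => ha_nonneg k
  have hSsucc : ∀ m, S (m + 1) = S m + a m := fun m => Finset.sum_range_succ a m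
  have hS_mono : Monotone S := by
    apply monotone_nat_of_le_succ
    intro n
    rw [hSsucc n]
    exact le_add_of_nonneg_right (ha_nonneg n)
  have hpow_pos : ∀ n, (0 : ℝ) < 2 ^ g n := fun n => by positivity
  have cancel : ∀ m : ℕ, (2 : ℝ) ^ m * (2 : ℝ) ^ (-(m : ℤ)) = 1 := by
    intro m
    rw [← zpow_natCast (2 : ℝ) m, ← zpow_add₀ (two_ne_zero (α := ℝ))]
    simp
  -- key identity for myT
  have hTa : ∀ n, (myT g n : ℝ) = 2 ^ g n * S (n + 1) := by
    intro n
    induction n with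
    | zero =>
      rw [myT_zero, hSsucc 0]
      have hS0 : S 0 = 0 := by simp [hS]
      rw [hS0, zero_add, cancel (g 0), Nat.cast_one]
    | succ n ih =>
      have hg1 : g n ≤ g (n + 1) := hmono (Nat.le_succ n)
      rw [myT_succ]
      push_cast
      rw [ih]
      have h1 : (2 : ℝ) ^ (g (n + 1) - g n) * (2 ^ g n * S (n + 1))
          = 2 ^ g (n + 1) * S (n + 1) := by
        rw [← mul_assoc, ← pow_add, Nat.sub_add_cancel hg1]
      rw [h1, hSsucc (n + 1), mul_add, cancel (g (n + 1))]
  -- the integer part D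
  set D : ℕ → ℕ := fun n => myT g n / 2 ^ g n with hD
  have hD_le : ∀ n, (D n : ℝ) ≤ S (n + 1) := by
    intro n
    have h1 : ((myT g n / 2 ^ g n : ℕ) : ℝ) ≤ (myT g n : ℝ) / ((2 ^ g n : ℕ) : ℝ) :=
      Nat.cast_div_le
    have h2 : ((2 ^ g n : ℕ) : ℝ) = 2 ^ g n := by push_cast; ring
    have h3 : (myT g n : ℝ) / ((2 ^ g n : ℕ) : ℝ) = S (n + 1) := by
      rw [h2, hTa n]
      field_simp
    calc (D n : ℝ) ≤ (myT g n : ℝ) / ((2 ^ g n : ℕ) : ℝ) := h1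
      _ = S (n + 1) := h3
  have hD_gt : ∀ n, S (n + 1) < D n + 1 := by
    intro n
    have h1 : myT g n < (D n + 1) * 2 ^ g n :=
      (Nat.div_lt_iff_lt_mul (Nat.two_pow_pos (g n))).1 (Nat.lt_succ_self (D n))
    have h2 : (myT g n : ℝ) < ((D n : ℝ) + 1) * 2 ^ g n := by exact_mod_cast h1
    rw [hTa n] at h2
    have := hpow_pos n
    nlinarith
  have hD_mono : Monotone D := by
    apply monotone_nat_of_le_succ
    intro n
    have h1 : (D n : ℝ) ≤ S (n + 1) := hD_le n
    have h2 : S (n + 1) ≤ S (n + 2) := hS_mono (by omega)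
    have h3 : S (n + 2) < D (n + 1) + 1 := hD_gt (n + 1)
    have h4 : (D n : ℝ) < (D (n + 1) : ℝ) + 1 := by linarith
    have h5 : D n < D (n + 1) + 1 := by exact_mod_cast h4
    omega
  -- divergence of S
  have hS_top : Tendsto S atTop atTop :=
    (not_summable_iff_tendsto_nat_atTop_of_nonneg ha_nonneg).1 hdiv
  -- the extra summand
  set h : ℕ → ℕ := fun n => Nat.log 2 (1 + D n) with hh
  have hpow_le_h : ∀ n, (2 : ℝ) ^ (h n) ≤ 1 + S (n + 1) := by
    intro n
    have h1 : 2 ^ h n ≤ 1 + D n := by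
      rw [hh]
      exact Nat.pow_log_le_self 2 (by omega)
    have h2 : ((2 ^ h n : ℕ) : ℝ) ≤ ((1 + D n : ℕ) : ℝ) := by exact_mod_cast h1
    push_cast at h2
    have h3 := hD_le n
    linarith
  refine ⟨fun n => g n + h n, ?_, ?_, ?_, ?_⟩
  · -- computability
    have hdiv2 : Computable₂ ((· / ·) : ℕ → ℕ → ℕ) := Primrec.nat_div.to_comp
    have hpowc : Computable₂ ((· ^ ·) : ℕ → ℕ → ℕ) :=
      (Primrec₂.unpaired'.1 Nat.Primrec.pow).to_comp
    have haddc : Computable₂ ((· + ·) : ℕ → ℕ → ℕ) := Primrec.nat_add.to_comp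
    have hDcomp : Computable D :=
      hdiv2.comp (computable_myT hg) (hpowc.comp (Computable.const 2) hg)
    have hhcomp : Computable h :=
      primrec_log2.to_comp.comp (haddc.comp (Computable.const 1) hDcomp)
    exact haddc.comp hg hhcomp
  · -- monotone
    intro m n hmn
    have h1 : h m ≤ h n := Nat.log_mono_right (by have := hD_mono hmn; omega)
    have h2 := hmono hmn
    simp only
    omega
  · -- tendsto to infinity
    have hD_top : Tendsto D atTop atTop := by
      apply tendsto_atTop_atTop_of_monotone hD_mono
      intro b
      obtain ⟨N, hN⟩ := (hS_top.eventually_ge_atTop ((b : ℝ) + 1)).exists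
      refine ⟨N, ?_⟩
      have h2 : S N ≤ S (N + 1) := hS_mono (Nat.le_succ N)
      have h3 := hD_gt N
      have h4 : (b : ℝ) < (D N : ℝ) := by linarith
      exact_mod_cast h4.le
    have hh_top : Tendsto h atTop atTop := by
      have hlog_top : Tendsto (Nat.log 2) atTop atTop := by
        apply tendsto_atTop_atTop_of_monotone (fun x y hxy => Nat.log_mono_right hxy)
        intro b
        exact ⟨2 ^ b, le_of_eq (Nat.log_pow one_lt_two b).symm⟩
      have h1D : Tendsto (fun n => 1 + D n) atTop atTop :=
        tendsto_atTop_mono (fun n => Nat.le_add_left _ _) hD_top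
      exact hlog_top.comp h1D
    have hZ : Tendsto (fun n => (h n : ℤ)) atTop atTop :=
      tendsto_natCast_atTop_atTop.comp hh_top
    refine hZ.congr fun n => ?_
    push_cast
    ring
  · -- divergence of the new series
    have hterm_nonneg : ∀ n, (0 : ℝ) ≤ (2 : ℝ) ^ (-((g n + h n : ℕ) : ℤ)) := fun n => by
      positivity
    rw [not_summable_iff_tendsto_nat_atTop_of_nonneg hterm_nonneg]
    have ha_le_one : ∀ n, a n ≤ 1 := by
      intro n
      show (2 : ℝ) ^ (-(g n : ℤ)) ≤ 1
      rw [zpow_neg, zpow_natCast]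
      exact inv_le_one_of_one_le₀ (one_le_pow₀ one_le_two)
    have key : ∀ n, (Real.log (1 + S (n + 1)) - Real.log (1 + S n)) / 2
        ≤ (2 : ℝ) ^ (-((g n + h n : ℕ) : ℤ)) := by
      intro n
      have hxle : 1 + S (n + 1) ≤ 2 * (1 + S n) := by
        have h1 := hSsucc n
        have h2 := ha_le_one n
        have h3 := hS_nonneg n
        rw [h1]; linarith
      set x : ℝ := 1 + S (n + 1) with hx
      set y : ℝ := 1 + S n with hy
      clear_value x y
      have hy_pos : 0 < y := by rw [hy]; have := hS_nonneg n; linarith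
      have hx_pos : 0 < x := by rw [hx]; have := hS_nonneg (n + 1); linarith
      have hyx : y ≤ x := by
        rw [hx, hy]
        have := hS_mono (Nat.le_succ n)
        linarith
      have hlog : Real.log x - Real.log y ≤ (x - y) / y := by
        have h3 : (x - y) / y = x / y - 1 := by field_simp
        rw [h3]
        set t : ℝ := x / y with htdef
        have ht_pos : 0 < t := by rw [htdef]; exact div_pos hx_pos hy_pos
        have h1 : Real.log t ≤ t - 1 := Real.log_le_sub_one_of_pos ht_pos
        have h2 : Real.log t = Real.log x - Real.log y := by
          rw [htdef]; exact Real.log_div hx_pos.ne' hy_pos.ne'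
        clear_value t
        exact h2 ▸ h1
      have hxy_eq : x - y = a n := by
        rw [hx, hy, hSsucc n]
        ring
      have hpow_le : (2 : ℝ) ^ (h n) ≤ 2 * y := by
        calc (2 : ℝ) ^ (h n) ≤ x := by rw [hx]; exact hpow_le_h n
          _ ≤ 2 * y := hxle
      have hterm : (2 : ℝ) ^ (-((g n + h n : ℕ) : ℤ)) = a n / 2 ^ (h n) := by
        have ha' : a n = (2 : ℝ) ^ (-(g n : ℤ)) := rfl
        rw [ha', eq_div_iff (by positivity : ((2 : ℝ) ^ h n) ≠ 0)]
        rw [← zpow_natCast (2 : ℝ) (h n), ← zpow_add₀ (two_ne_zero (α := ℝ))]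
        congr 1
        push_cast
        ring
      rw [hterm, ← hxy_eq]
      have hxy_nonneg : 0 ≤ x - y := by linarith
      calc (Real.log x - Real.log y) / 2 ≤ ((x - y) / y) / 2 :=
            (div_le_div_iff_of_pos_right (by norm_num : (0:ℝ) < 2)).2 hlog
        _ = (x - y) / (2 * y) := by
            rw [div_div]
            ring_nf
        _ ≤ (x - y) / 2 ^ h n :=
            div_le_div_of_nonneg_left hxy_nonneg (by positivity) hpow_le
    have htel : ∀ N, (Real.log (1 + S N) - Real.log (1 + S 0)) / 2
        ≤ ∑ n ∈ range N, (2 : ℝ) ^ (-((g n + h n : ℕ) : ℤ)) := by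
      intro N
      have h0 := Finset.sum_range_sub (fun n => Real.log (1 + S n)) N
      calc (Real.log (1 + S N) - Real.log (1 + S 0)) / 2
          = ∑ n ∈ range N, (Real.log (1 + S (n + 1)) - Real.log (1 + S n)) / 2 := by
            rw [← Finset.sum_div, h0]
        _ ≤ ∑ n ∈ range N, (2 : ℝ) ^ (-((g n + h n : ℕ) : ℤ)) :=
            Finset.sum_le_sum fun n _ => key n
    have hcomp : Tendsto (fun N => Real.log (1 + S N)) atTop atTop :=
      Real.tendsto_log_atTop.comp (tendsto_atTop_add_const_left _ 1 hS_top)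
    have hlogS_top : Tendsto (fun N => (Real.log (1 + S N) - Real.log (1 + S 0)) / 2)
        atTop atTop := by
      apply Tendsto.atTop_div_const (by norm_num : (0:ℝ) < 2)
      have := tendsto_atTop_add_const_right atTop (-(Real.log (1 + S 0))) hcomp
      simpa [sub_eq_add_neg] using this
    exact tendsto_atTop_mono htel hlogS_top
end

section
/- Let c ∈ ℕ, let h(x) = x + c, and let n > 0 and k > 0 be natural numbers. Then the h-load process on the interval (k, k+n] terminates, and its final value of γ equals n·2^{−(k+c)}. -/
/-- The binary digit of a rational `q` at position `t` (the coefficient of `2^(-t)`). -/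
def qdigit (q : ℚ) (t : ℕ) : ℤ := ⌊q * 2 ^ t⌋ % 2

/-- The least position in `{1, …, ℓ}` at which the binary digits of `q` and `q'` differ
(with default value `0` if there is none). -/
def leastChange (q q' : ℚ) (ℓ : ℕ) : ℕ :=
  ((((List.range ℓ).map (· + 1)).find? (fun t => decide (qdigit q t ≠ qdigit q' t))).getD 0)

/-- The least increase of `γ` that changes one of its first `u` binary digits. -/
def gup (u : ℕ) (γ : ℚ) : ℚ := ((⌊(2 : ℚ) ^ u * γ⌋ : ℚ) + 1) / 2 ^ u

/-- The `h`-load process with target interval ending at `ℓ`: at stage `s+1`, `2^(-ℓ)` is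
added to `α` if `s` is odd and to `β` if `s` is even, and `γ` is increased by the least
amount changing one of its first `h k` digits, where `k` is the least position at which
a digit of the increased real changed. The value is the triple `(α_s, β_s, γ_s)`. -/
def load (h : ℕ → ℕ) (ℓ : ℕ) : ℕ → ℚ × ℚ × ℚ
  | 0 => (0, 0, 0)
  | s + 1 =>
    let p := load h ℓ s
    if s % 2 = 1 then
      let a' := p.1 + (2 : ℚ) ^ (-(ℓ : ℤ))
      (a', p.2.1, gup (h (leastChange p.1 a' ℓ)) p.2.2)
    else
      let b' := p.2.1 + (2 : ℚ) ^ (-(ℓ : ℤ))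
      (p.1, b', gup (h (leastChange p.2.1 b' ℓ)) p.2.2)

/-- The `h`-load process on the interval `(m, ℓ]` is finished at stage `s` when both `α`
and `β` have digit `1` at every position in `(m, ℓ]`. -/
def loadDone (h : ℕ → ℕ) (m ℓ s : ℕ) : Prop :=
  ∀ t, m < t → t ≤ ℓ →
    qdigit (load h ℓ s).1 t = 1 ∧ qdigit (load h ℓ s).2.1 t = 1

namespace LoadAux

/-- trailing-ones count of `m` = 2-adic valuation of `m+1`. -/
def vv (m : ℕ) : ℕ := (m + 1).factorization 2

lemma pow_vv_dvd (m : ℕ) : 2 ^ vv m ∣ m + 1 := Nat.ordProj_dvd _ _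

lemma vv_spec (m : ℕ) : ∃ q, m + 1 = 2 ^ vv m * q ∧ q % 2 = 1 := by
  refine ⟨(m + 1) / 2 ^ vv m, (Nat.ordProj_mul_ordCompl_eq_self (m + 1) 2).symm, ?_⟩
  have h := Nat.not_dvd_ordCompl Nat.prime_two (Nat.succ_ne_zero m)
  unfold vv
  simp only [Nat.succ_eq_add_one] at h
  omega

lemma not_pow_dvd (m j : ℕ) (hj : vv m < j) : ¬ 2 ^ j ∣ m + 1 := by
  intro h
  have h2 := (Nat.Prime.pow_dvd_iff_le_factorization Nat.prime_two (Nat.succ_ne_zero m)).1 h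
  unfold vv at hj
  simp only [Nat.succ_eq_add_one] at h2
  omega

lemma vv_even (a : ℕ) : vv (2 * a) = 0 :=
  Nat.factorization_eq_zero_of_not_dvd (by omega)

lemma vv_odd (a : ℕ) : vv (2 * a + 1) = vv a + 1 := by
  have h : (2 * a + 1) + 1 = 2 * (a + 1) := by ring
  rw [vv, h, Nat.factorization_mul two_ne_zero (Nat.succ_ne_zero a)]
  simp [Nat.Prime.factorization Nat.prime_two, vv, add_comm]

def T (m : ℕ) : ℕ := ∑ i ∈ Finset.range m, 2 ^ vv i

lemma T_succ (m : ℕ) : T (m + 1) = T m + 2 ^ vv m := Finset.sum_range_succ _ _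

lemma T_two_mul (a : ℕ) : T (2 * a) = a + 2 * T a := by
  induction a with
  | zero => simp [T]
  | succ a ih =>
    have h1 : 2 * (a + 1) = (2 * a + 1) + 1 := by ring
    rw [h1, T_succ, T_succ, vv_even, vv_odd, T_succ, ih]
    ring

lemma dvd_two_T (m : ℕ) : 2 ^ vv m ∣ 2 * T m := by
  induction m using Nat.strong_induction_on with
  | _ m ih =>
    rcases Nat.even_or_odd m with ⟨a, ha⟩ | ⟨a, ha⟩
    · rw [show m = 2 * a by omega, vv_even, pow_zero]
      exact one_dvd _
    · rw [show m = 2 * a + 1 by omega, vv_odd]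
      have h2 : T (2 * a + 1) = T (2 * a) + 1 := by rw [T_succ, vv_even, pow_zero]
      have h3 : 2 * T (2 * a + 1) = 2 * ((a + 1) + 2 * T a) := by
        rw [h2, T_two_mul]; ring
      rw [h3, pow_succ, mul_comm (2 ^ vv a) 2]
      exact mul_dvd_mul_left 2 (dvd_add (pow_vv_dvd a) (ih a (by omega)))

lemma T_pow (n : ℕ) : 2 * T (2 ^ n - 1) = n * 2 ^ n := by
  induction n with
  | zero => simp [T]
  | succ n ih =>
    have hp : 0 < 2 ^ n := Nat.pow_pos (by norm_num)
    have h1 : 2 ^ (n + 1) - 1 = (2 * (2 ^ n - 1)) + 1 := by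
      rw [pow_succ]; omega
    rw [h1, T_succ, vv_even, pow_zero, T_two_mul]
    have : 2 * (2 ^ n - 1 + 2 * T (2 ^ n - 1) + 1) = 2 * (2 ^ n - 1) + 2 * (n * 2 ^ n) + 2 := by
      rw [← ih]; ring
    rw [this, pow_succ]
    ring_nf
    omega

def S : ℕ → ℕ
  | 0 => 0
  | s + 1 => S s + 2 ^ vv (s / 2)

lemma S_even (m : ℕ) : S (2 * m) = 2 * T m := by
  induction m with
  | zero => simp [S, T]
  | succ m ih =>
    have h1 : 2 * (m + 1) = (2 * m + 1) + 1 := by ring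
    rw [h1, S, S, ih, T_succ]
    have h2 : (2 * m + 1) / 2 = m := by omega
    have h3 : (2 * m) / 2 = m := by omega
    rw [h2, h3]; ring

lemma dvd_S (s : ℕ) : 2 ^ vv (s / 2) ∣ S s := by
  rcases Nat.even_or_odd s with ⟨a, ha⟩ | ⟨a, ha⟩
  · rw [show s = 2 * a by omega, show (2 * a) / 2 = a by omega, S_even]
    exact dvd_two_T a
  · rw [show s = 2 * a + 1 by omega, show (2 * a + 1) / 2 = a by omega, S,
      show (2 * a) / 2 = a by omega, S_even]
    exact dvd_add (dvd_two_T a) dvd_rfl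


lemma qdigit_nat_div (m ℓ t : ℕ) (ht : t ≤ ℓ) :
    qdigit ((m : ℚ) / 2 ^ ℓ) t = ((m / 2 ^ (ℓ - t)) % 2 : ℕ) := by
  have h2 : (2 : ℚ) ^ ℓ = (2 : ℚ) ^ (ℓ - t) * 2 ^ t := by
    rw [← pow_add, Nat.sub_add_cancel ht]
  have hne : (2 : ℚ) ^ t ≠ 0 := by positivity
  have hne2 : (2 : ℚ) ^ (ℓ - t) ≠ 0 := by positivity
  have key : (m : ℚ) / 2 ^ ℓ * 2 ^ t = ((m : ℤ) : ℚ) / ((2 ^ (ℓ - t) : ℕ) : ℚ) := by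
    push_cast
    rw [h2]
    field_simp
  rw [qdigit, key, Rat.floor_intCast_div_natCast]
  rw [show ((m : ℤ) / ((2 ^ (ℓ - t) : ℕ) : ℤ)) = ((m / 2 ^ (ℓ - t) : ℕ) : ℤ) by
    rw [Int.natCast_div]]
  push_cast
  ring

lemma find?_range'_eq (p : ℕ → Bool) (t₀ : ℕ) : ∀ (b a : ℕ), a ≤ t₀ → t₀ < a + b →
    p t₀ = true → (∀ t, a ≤ t → t < t₀ → p t = false) →
    (List.range' a b).find? p = some t₀ := by
  intro b
  induction b with
  | zero => intro a h1 h2; omega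
  | succ b ih =>
    intro a h1 h2 h3 h4
    rw [List.range'_succ]
    by_cases ha : a = t₀
    · subst ha; rw [List.find?_cons_of_pos h3]
    · rw [List.find?_cons_of_neg]
      · exact ih (a + 1) (by omega) (by omega) h3 (fun t h h' => h4 t (by omega) h')
      · simp [h4 a le_rfl (by omega)]

lemma leastChange_eq (m ℓ : ℕ) (h : vv m < ℓ) :
    leastChange ((m : ℚ) / 2 ^ ℓ) (((m + 1 : ℕ) : ℚ) / 2 ^ ℓ) ℓ = ℓ - vv m := by
  obtain ⟨q, hq, hqodd⟩ := vv_spec m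
  have h2 : 0 < 2 ^ vv m := Nat.pow_pos (by norm_num)
  obtain ⟨q', rfl⟩ : ∃ q', q = q' + 1 := ⟨q - 1, by omega⟩
  have hdivm : m / 2 ^ vv m = q' := by
    have e : 2 ^ vv m * (q' + 1) = 2 ^ vv m * q' + 2 ^ vv m := by ring
    have e2 : q' * 2 ^ vv m = 2 ^ vv m * q' := mul_comm _ _
    have hm : m = (2 ^ vv m - 1) + q' * 2 ^ vv m := by omega
    have hgen : ((2 ^ vv m - 1) + q' * 2 ^ vv m) / 2 ^ vv m = q' := by
      rw [Nat.add_mul_div_right _ _ h2, Nat.div_eq_of_lt (by omega)]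
      omega
    rw [← hm] at hgen
    exact hgen
  have hdivm1 : (m + 1) / 2 ^ vv m = q' + 1 := by
    rw [hq, Nat.mul_div_cancel_left _ h2]
  have hmap : (List.range ℓ).map (· + 1) = List.range' 1 ℓ := by
    rw [List.range'_eq_map_range]
    exact List.map_congr_left (fun a _ => by omega)
  rw [leastChange, hmap,
    find?_range'_eq _ (ℓ - vv m) ℓ 1 (by omega) (by omega) ?_ ?_]
  · rfl
  · -- digits differ at position ℓ - vv m
    have ht : ℓ - (ℓ - vv m) = vv m := by omega
    rw [decide_eq_true_eq]
    rw [qdigit_nat_div m ℓ _ (by omega), qdigit_nat_div (m + 1) ℓ _ (by omega), ht,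
      hdivm, hdivm1]
    have e1 : q' % 2 = 0 := by omega
    have e2 : (q' + 1) % 2 = 1 := by omega
    rw [e1, e2]
    norm_num
  · -- digits agree before
    intro t ht1 ht2
    have hj : vv m < ℓ - t := by omega
    have hd : (m + 1) / 2 ^ (ℓ - t) = m / 2 ^ (ℓ - t) := by
      rw [Nat.succ_div, if_neg (not_pow_dvd m _ hj), Nat.add_zero]
    rw [decide_eq_false_iff_not]
    rw [qdigit_nat_div m ℓ _ (by omega), qdigit_nat_div (m + 1) ℓ _ (by omega), hd]
    exact fun hco => hco rfl

lemma gup_eq (v u N : ℕ) (hv : v ≤ u) (hdvd : 2 ^ v ∣ N) :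
    gup (u - v) ((N : ℚ) / 2 ^ u) = (((N + 2 ^ v : ℕ)) : ℚ) / 2 ^ u := by
  obtain ⟨W, hW⟩ := hdvd
  have hpow : (2 : ℚ) ^ (u - v) * 2 ^ v = 2 ^ u := by
    rw [← pow_add, Nat.sub_add_cancel hv]
  have hne : (2 : ℚ) ^ v ≠ 0 := by positivity
  have hne2 : (2 : ℚ) ^ (u - v) ≠ 0 := by positivity
  have hval : (2 : ℚ) ^ (u - v) * ((N : ℚ) / 2 ^ u) = ((W : ℤ) : ℚ) := by
    subst hW
    push_cast
    rw [← hpow]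
    field_simp
  rw [gup, hval, Int.floor_intCast]
  subst hW
  push_cast
  rw [← hpow]
  field_simp

end LoadAux

namespace LoadAux

lemma two_zpow_neg (ℓ : ℕ) : (2 : ℚ) ^ (-(ℓ : ℤ)) = 1 / 2 ^ ℓ := by
  rw [zpow_neg, zpow_natCast]
  exact inv_eq_one_div _

lemma vv_lt (m n : ℕ) (h : m + 1 ≤ 2 ^ n - 1) : vv m < n := by
  by_contra hc
  push_neg at hc
  have h1 : (2 : ℕ) ^ n ≤ 2 ^ vv m := Nat.pow_le_pow_right (by norm_num) hc
  have h2 := Nat.le_of_dvd (by omega) (pow_vv_dvd m)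
  have h3 : 0 < 2 ^ n := Nat.pow_pos (by norm_num)
  omega

lemma load_eq (c k n : ℕ) (hn : 0 < n) :
    ∀ s, s ≤ 2 * (2 ^ n - 1) →
      load (fun x => x + c) (k + n) s =
        (((s / 2 : ℕ) : ℚ) / 2 ^ (k + n), (((s + 1) / 2 : ℕ) : ℚ) / 2 ^ (k + n),
          ((S s : ℕ) : ℚ) / 2 ^ (k + n + c)) := by
  intro s
  induction s with
  | zero => intro _; simp [load, S]
  | succ s ih =>
    intro hs
    have hpn : 0 < 2 ^ n := Nat.pow_pos (by norm_num)
    have ihs := ih (by omega)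
    have hm : s / 2 + 1 ≤ 2 ^ n - 1 := by omega
    have hv : vv (s / 2) < n := vv_lt _ _ hm
    have hstep : ((s / 2 : ℕ) : ℚ) / 2 ^ (k + n) + (2 : ℚ) ^ (-((k + n : ℕ) : ℤ))
        = (((s / 2 + 1 : ℕ)) : ℚ) / 2 ^ (k + n) := by
      rw [two_zpow_neg]
      push_cast
      ring
    have hlc : leastChange (((s / 2 : ℕ) : ℚ) / 2 ^ (k + n))
        ((((s / 2 + 1 : ℕ)) : ℚ) / 2 ^ (k + n)) (k + n) = (k + n) - vv (s / 2) :=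
      leastChange_eq _ _ (by omega)
    have hSs : S (s + 1) = S s + 2 ^ vv (s / 2) := rfl
    have hgup : gup ((k + n) - vv (s / 2) + c) (((S s : ℕ) : ℚ) / 2 ^ (k + n + c))
        = ((S (s + 1) : ℕ) : ℚ) / 2 ^ (k + n + c) := by
      have e : (k + n) - vv (s / 2) + c = (k + n + c) - vv (s / 2) := by omega
      rw [e, gup_eq (vv (s / 2)) (k + n + c) (S s) (by omega) (dvd_S s), hSs]
    rcases Nat.even_or_odd s with he | ho
    · have hmod : ¬ s % 2 = 1 := by
        obtain ⟨a, ha⟩ := he; omega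
      have h12 : (s + 1) / 2 = s / 2 := by
        obtain ⟨a, ha⟩ := he; omega
      have h22 : (s + 1 + 1) / 2 = s / 2 + 1 := by
        obtain ⟨a, ha⟩ := he; omega
      simp only [load, if_neg hmod, ihs, h12]
      rw [hstep, hlc, hgup, h22]
    · have hmod : s % 2 = 1 := by
        obtain ⟨a, ha⟩ := ho; omega
      have h12 : (s + 1) / 2 = s / 2 + 1 := by omega
      have h22 : (s + 1 + 1) / 2 = s / 2 + 1 := by omega
      simp only [load, if_pos hmod, ihs]
      rw [hstep, hlc, hgup, h12, h22]

lemma bits_allones (n j : ℕ) (hj : j < n) : ((2 ^ n - 1) / 2 ^ j) % 2 = 1 := by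
  have hj2 : 0 < 2 ^ j := Nat.pow_pos (by norm_num)
  have hx : 0 < 2 ^ (n - j) := Nat.pow_pos (by norm_num)
  have h1 : (2 : ℕ) ^ (n - j) * 2 ^ j = 2 ^ n := by
    rw [← pow_add]; congr 1; omega
  obtain ⟨A, hA⟩ : ∃ A, 2 ^ (n - j) = A + 1 := ⟨2 ^ (n - j) - 1, by omega⟩
  have e : (2 ^ (n - j) - 1) * 2 ^ j = A * 2 ^ j := by rw [hA]; simp
  have h1' : (A + 1) * 2 ^ j = 2 ^ n := by rw [← hA]; exact h1
  have e2 : (A + 1) * 2 ^ j = A * 2 ^ j + 2 ^ j := by ring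
  have hm : 2 ^ n - 1 = (2 ^ j - 1) + (2 ^ (n - j) - 1) * 2 ^ j := by rw [e]; omega
  rw [hm, Nat.add_mul_div_right _ _ hj2, Nat.div_eq_of_lt (by omega)]
  have h2 : 2 ^ (n - j) = 2 * 2 ^ (n - j - 1) := by
    rw [← pow_succ']; congr 1; omega
  omega

lemma exists_zero_bit (n : ℕ) : ∀ m, m < 2 ^ n - 1 → ∃ j < n, (m / 2 ^ j) % 2 = 0 := by
  induction n with
  | zero => intro m hm; simp at hm
  | succ n ih =>
    intro m hm
    by_cases hp : m % 2 = 0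
    · exact ⟨0, by omega, by simpa using hp⟩
    · have hpn : 0 < 2 ^ n := Nat.pow_pos (by norm_num)
      have hm' : m / 2 < 2 ^ n - 1 := by rw [pow_succ] at hm; omega
      obtain ⟨j, hj, hz⟩ := ih (m / 2) hm'
      refine ⟨j + 1, by omega, ?_⟩
      have h2 : (2 : ℕ) ^ (j + 1) = 2 * 2 ^ j := by rw [pow_succ']
      rw [h2, ← Nat.div_div_eq_div_mul]
      exact hz

end LoadAux


open LoadAux in
/-- Atomic attack: for `h x = x + c`, the `h`-load process on `(k, k+n]` terminates with
final value `γ = n·2^(-(k+c))`. -/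
theorem stmt16 (c : ℕ) (n k : ℕ) (hn : 0 < n) (hk : 0 < k) :
    ∃ s, loadDone (fun x => x + c) k (k + n) s ∧
      (∀ u < s, ¬ loadDone (fun x => x + c) k (k + n) u) ∧
      (load (fun x => x + c) (k + n) s).2.2 = (n : ℚ) / 2 ^ (k + c) := by
  have hpn : 0 < 2 ^ n := Nat.pow_pos (by norm_num)
  have hload := load_eq c k n hn
  have hdiv1 : (2 * (2 ^ n - 1)) / 2 = 2 ^ n - 1 := by omega
  have hdiv2 : (2 * (2 ^ n - 1) + 1) / 2 = 2 ^ n - 1 := by omega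
  refine ⟨2 * (2 ^ n - 1), ?_, ?_, ?_⟩
  · intro t ht1 ht2
    rw [hload _ le_rfl]
    simp only [hdiv1, hdiv2]
    have hq : qdigit (((2 ^ n - 1 : ℕ) : ℚ) / 2 ^ (k + n)) t = 1 := by
      rw [qdigit_nat_div _ _ _ (by omega), bits_allones n (k + n - t) (by omega)]
      norm_num
    exact ⟨hq, hq⟩
  · intro u hu hd
    have hm : u / 2 < 2 ^ n - 1 := by omega
    obtain ⟨j, hj, hz⟩ := exists_zero_bit n (u / 2) hm
    have hthis := (hd (k + n - j) (by omega) (by omega)).1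
    rw [hload u (by omega)] at hthis
    rw [qdigit_nat_div _ _ _ (by omega),
      show k + n - (k + n - j) = j by omega, hz] at hthis
    norm_num at hthis
  · rw [hload _ le_rfl]
    show ((S (2 * (2 ^ n - 1)) : ℕ) : ℚ) / 2 ^ (k + n + c) = (n : ℚ) / 2 ^ (k + c)
    rw [S_even, T_pow]
    have h2 : (2 : ℚ) ^ (k + n + c) = 2 ^ (k + c) * 2 ^ n := by
      rw [← pow_add]; congr 1; omega
    have hne : (2 : ℚ) ^ (k + c) ≠ 0 := by positivity
    have hne2 : (2 : ℚ) ^ n ≠ 0 := by positivity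
    rw [h2]
    push_cast
    field_simp
end

section
/- Let g : ℕ → ℕ be a nondecreasing computable function with infinite signature (c_j, I_j)_{j≥0}, let h(x) = x + g(x), and let t ≤ k. Suppose m ≥ 0 is either an element of I_{k−t} smaller than max I_{k−t}, or is the largest integer less than all elements of I_{k−t}. Then the h-load process on the interval (m, max I_k] terminates, and its final value γ satisfies T(2^m·γ, c_{k−t}) = S_k(t−1) + (max I_{k−t} − m)·2^{−c_{k−t}}, where S_k(−1) is taken to be 0. -/
/-- `IsSignature g c n` says that `(c j, [n j, n (j+1)))` is the signature of the
nondecreasing function `g`: the intervals `I j = [n j, n (j+1))` partition `ℕ`, they are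
the maximal intervals on which `g` is constant (with value `c j`), and `c` is strictly
increasing (so the signature is infinite). -/
def IsSignature (g : ℕ → ℕ) (c : ℕ → ℕ) (n : ℕ → ℕ) : Prop :=
  n 0 = 0 ∧ StrictMono n ∧ StrictMono c ∧
    ∀ j x, n j ≤ x → x < n (j + 1) → g x = c j

/-- `x` truncated to its first `c` binary digits. -/
def trunc (x : ℚ) (c : ℕ) : ℚ := (⌊x * 2 ^ c⌋ : ℚ) / 2 ^ c

/-- The truncated sums `S_k i` associated with a signature with values `c j` and interval
sizes `sz j`. -/
def truncS (c : ℕ → ℕ) (sz : ℕ → ℕ) (k : ℕ) : ℕ → ℚ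
  | 0 => trunc ((sz k : ℚ) / 2 ^ c k) (c (k - 1))
  | i + 1 => trunc ((sz (k - (i + 1)) : ℚ) / 2 ^ c (k - (i + 1)) + truncS c sz k i)
      (c (k - (i + 1) - 1))

lemma floor_nat_div (a n : ℕ) : ⌊(a : ℚ) / (n : ℚ)⌋ = ((a / n : ℕ) : ℤ) := by
  rw [← Int.natCast_floor_eq_floor (by positivity), Nat.floor_div_eq_div]

lemma trunc_eq_nat (x : ℚ) (hx : 0 ≤ x) (c : ℕ) :
    trunc x c = (⌊x * 2 ^ c⌋₊ : ℚ) / 2 ^ c := by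
  rw [trunc, natCast_floor_eq_intCast_floor (by positivity)]

lemma trunc_trunc (x : ℚ) (hx : 0 ≤ x) {c c' : ℕ} (h : c' ≤ c) :
    trunc (trunc x c) c' = trunc x c' := by
  rw [trunc_eq_nat x hx c, trunc_eq_nat _ (by positivity), trunc_eq_nat x hx c']
  congr 2
  have h1 : (2:ℚ) ^ c = 2 ^ (c - c') * 2 ^ c' := by
    rw [← pow_add]; congr 1; omega
  have h2 : (⌊x * 2 ^ c⌋₊ : ℚ) / 2 ^ c * 2 ^ c' = (⌊x * 2 ^ c⌋₊ : ℚ) / ((2 ^ (c - c') : ℕ) : ℚ) := by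
    push_cast; rw [h1]; field_simp
  rw [h2, Nat.floor_div_eq_div, ← Nat.floor_div_natCast]
  congr 1
  push_cast
  rw [h1]; field_simp

lemma trunc_nonneg (x : ℚ) (hx : 0 ≤ x) (c : ℕ) : 0 ≤ trunc x c := by
  rw [trunc_eq_nat x hx]; positivity

lemma trunc_le (x : ℚ) (c : ℕ) : trunc x c ≤ x := by
  rw [trunc, div_le_iff₀ (by positivity)]
  exact Int.floor_le _

lemma lt_trunc_add (x : ℚ) (c : ℕ) : x < trunc x c + 1 / 2 ^ c := by
  rw [trunc, ← add_div, lt_div_iff₀ (by positivity)]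
  exact Int.lt_floor_add_one _

lemma trunc_mul_pow_int (x : ℚ) (c : ℕ) : ∃ z : ℤ, trunc x c = (z : ℚ) / 2 ^ c :=
  ⟨⌊x * 2 ^ c⌋, rfl⟩

def gup2 (u : ℕ) (x : ℚ) : ℚ := gup u (gup u x)

lemma gup2_eq (u : ℕ) (x : ℚ) : gup2 u x = trunc x u + 2 / 2 ^ u := by
  have hp : ((2:ℚ) ^ u) ≠ 0 := by positivity
  have h1 : gup u x = ((⌊x * 2 ^ u⌋ : ℚ) + 1) / 2 ^ u := by
    rw [gup, mul_comm]
  rw [gup2, h1, gup]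
  have h2 : (2:ℚ) ^ u * (((⌊x * 2 ^ u⌋ : ℚ) + 1) / 2 ^ u) = (⌊x * 2 ^ u⌋ : ℚ) + 1 := by
    field_simp
  rw [h2]
  have h3 : ⌊((⌊x * 2 ^ u⌋ : ℚ) + 1)⌋ = ⌊x * 2 ^ u⌋ + 1 := by
    rw [← Int.cast_one, ← Int.cast_add, Int.floor_intCast]
  rw [h3, trunc]
  push_cast
  ring

lemma gup2_add_int (u : ℕ) (x : ℚ) (z : ℤ) :
    gup2 u (x + (z : ℚ) / 2 ^ u) = gup2 u x + (z : ℚ) / 2 ^ u := by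
  have hp : ((2:ℚ) ^ u) ≠ 0 := by positivity
  rw [gup2_eq, gup2_eq, trunc, trunc]
  have h1 : (x + (z : ℚ) / 2 ^ u) * 2 ^ u = x * 2 ^ u + z := by field_simp
  rw [h1, Int.floor_add_intCast]
  push_cast
  ring

lemma gup2_dyadic (u : ℕ) (x : ℚ) : ∃ z : ℤ, gup2 u x = (z : ℚ) / 2 ^ u := by
  refine ⟨⌊x * 2 ^ u⌋ + 2, ?_⟩
  rw [gup2_eq, trunc]
  push_cast
  ring

def runp (h : ℕ → ℕ) (ℓ : ℕ) : ℕ → ℚ → ℚ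
  | 0, x => x
  | d + 1, x => runp h ℓ d (gup2 (h (ℓ - d)) (runp h ℓ d x))

def Aseq (h : ℕ → ℕ) (ℓ : ℕ) : ℕ → ℚ
  | 0 => 0
  | d + 1 => Aseq h ℓ d + trunc (Aseq h ℓ d) (h (ℓ - d)) + 2 / 2 ^ (h (ℓ - d))

lemma dyadic_mono {u u' : ℕ} (h : u ≤ u') {x : ℚ} (hx : ∃ z : ℤ, x = (z : ℚ) / 2 ^ u) :
    ∃ z : ℤ, x = (z : ℚ) / 2 ^ u' := by
  obtain ⟨z, rfl⟩ := hx
  refine ⟨z * 2 ^ (u' - u), ?_⟩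
  have : (2:ℚ) ^ u' = 2 ^ (u' - u) * 2 ^ u := by rw [← pow_add]; congr 1; omega
  push_cast
  rw [this]
  field_simp

lemma runp_add (h : ℕ → ℕ) (hmono : Monotone h) (ℓ : ℕ) :
    ∀ d x, (∃ z : ℤ, x = (z : ℚ) / 2 ^ (h (ℓ - d))) →
      runp h ℓ d x = x + runp h ℓ d 0 := by
  intro d
  induction d with
  | zero => intro x _; simp [runp]
  | succ d ih =>
    intro x hx
    have hmle : h (ℓ - (d + 1)) ≤ h (ℓ - d) := hmono (by omega)
    have hx' : ∃ z : ℤ, x = (z : ℚ) / 2 ^ (h (ℓ - d)) := dyadic_mono hmle hx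
    obtain ⟨z, hz⟩ := hx'
    have h1 : runp h ℓ d x = x + runp h ℓ d 0 := ih x ⟨z, hz⟩
    have h2 : gup2 (h (ℓ - d)) (runp h ℓ d x) = x + gup2 (h (ℓ - d)) (runp h ℓ d 0) := by
      rw [h1, add_comm x, hz, gup2_add_int, ← hz]; ring
    obtain ⟨w, hw⟩ := gup2_dyadic (h (ℓ - d)) (runp h ℓ d 0)
    have h3 : runp h ℓ d (gup2 (h (ℓ - d)) (runp h ℓ d 0)) =
        gup2 (h (ℓ - d)) (runp h ℓ d 0) + runp h ℓ d 0 := ih _ ⟨w, hw⟩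
    have h4 : runp h ℓ d (x + gup2 (h (ℓ - d)) (runp h ℓ d 0)) =
        x + gup2 (h (ℓ - d)) (runp h ℓ d 0) + runp h ℓ d 0 := by
      refine ih _ ?_
      refine ⟨z + w, ?_⟩
      rw [hz, hw]; push_cast; ring
    show runp h ℓ d (gup2 (h (ℓ - d)) (runp h ℓ d x)) = x + runp h ℓ d (gup2 (h (ℓ - d)) (runp h ℓ d 0))
    rw [h2, h4, h3]; ring

lemma runp_zero_eq_Aseq (h : ℕ → ℕ) (hmono : Monotone h) (ℓ : ℕ) :
    ∀ d, runp h ℓ d 0 = Aseq h ℓ d := by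
  intro d
  induction d with
  | zero => rfl
  | succ d ih =>
    show runp h ℓ d (gup2 (h (ℓ - d)) (runp h ℓ d 0)) = _
    obtain ⟨w, hw⟩ := gup2_dyadic (h (ℓ - d)) (runp h ℓ d 0)
    rw [runp_add h hmono ℓ d _ ⟨w, hw⟩, gup2_eq, Aseq, ih]
    ring

lemma qdigit_nat (a ℓ t : ℕ) (ht : t ≤ ℓ) :
    qdigit ((a : ℚ) / 2 ^ ℓ) t = ((a / 2 ^ (ℓ - t)) % 2 : ℕ) := by
  have h1 : (a : ℚ) / 2 ^ ℓ * 2 ^ t = (a : ℚ) / ((2 ^ (ℓ - t) : ℕ) : ℚ) := by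
    have : (2:ℚ) ^ ℓ = 2 ^ (ℓ - t) * 2 ^ t := by rw [← pow_add]; congr 1; omega
    push_cast
    rw [this]
    field_simp
  rw [qdigit, h1, floor_nat_div]
  push_cast
  ring

lemma nat_digit_diff (e a : ℕ) :
    ((a / 2 ^ e) % 2 ≠ ((a + 1) / 2 ^ e) % 2) ↔ 2 ^ e ∣ (a + 1) := by
  have h2e : 0 < 2 ^ e := Nat.pow_pos (by norm_num)
  constructor
  · intro hne
    by_contra hdvd
    have hs : 0 < (a + 1) % 2 ^ e := Nat.pos_of_ne_zero (fun h0 => hdvd (Nat.dvd_of_mod_eq_zero h0))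
    have hq := Nat.div_add_mod (a + 1) (2 ^ e)
    set q := (a + 1) / 2 ^ e
    set s := (a + 1) % 2 ^ e
    have hslt : s < 2 ^ e := Nat.mod_lt _ h2e
    have ha : a = 2 ^ e * q + (s - 1) := by omega
    have : a / 2 ^ e = q := by
      rw [ha, Nat.mul_add_div h2e, Nat.div_eq_of_lt (by omega)]
      omega
    exact hne (by rw [this])
  · rintro ⟨c, hc⟩
    have hc1 : 0 < c := by
      rcases Nat.eq_zero_or_pos c with rfl | hc1
      · omega
      · exact hc1
    obtain ⟨c', rfl⟩ : ∃ c', c = c' + 1 := ⟨c - 1, by omega⟩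
    rw [Nat.mul_add, Nat.mul_one] at hc
    have ha : a = 2 ^ e * c' + (2 ^ e - 1) := by omega
    have h1 : a / 2 ^ e = c' := by
      rw [ha, Nat.mul_add_div h2e, Nat.div_eq_of_lt (by omega)]; omega
    have h2 : (a + 1) / 2 ^ e = c' + 1 := by
      rw [hc, Nat.mul_add_div h2e, Nat.div_self h2e]
    rw [h1, h2]
    omega

lemma find?_range' (f : ℕ → Bool) : ∀ (n s j : ℕ), s ≤ j → j < s + n → f j = true →
    (∀ t, s ≤ t → t < j → f t = false) → (List.range' s n).find? f = some j := by
  intro n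
  induction n with
  | zero => intro s j h1 h2; omega
  | succ n ih =>
    intro s j h1 h2 hj hlt
    rw [List.range'_succ]
    rcases eq_or_lt_of_le h1 with rfl | hsj
    · rw [List.find?_cons_of_pos hj]
    · rw [List.find?_cons_of_neg (by rw [hlt s le_rfl hsj]; simp)]
      exact ih (s + 1) j (by omega) (by omega) hj (fun t ht1 ht2 => hlt t (by omega) ht2)

lemma leastChange_eq (r ℓ : ℕ) (hv : padicValNat 2 (r + 1) + 1 ≤ ℓ) :
    leastChange ((r : ℚ) / 2 ^ ℓ) (((r + 1 : ℕ) : ℚ) / 2 ^ ℓ) ℓ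
      = ℓ - padicValNat 2 (r + 1) := by
  set v := padicValNat 2 (r + 1) with hvdef
  have hmap : (List.range ℓ).map (· + 1) = List.range' 1 ℓ := by
    rw [List.range'_eq_map_range]
    exact List.map_congr_left (fun a _ => Nat.add_comm a 1)
  have hdig : ∀ t, 1 ≤ t → t ≤ ℓ →
      ((qdigit ((r : ℚ) / 2 ^ ℓ) t ≠ qdigit (((r + 1 : ℕ) : ℚ) / 2 ^ ℓ) t) ↔ ℓ - t ≤ v) := by
    intro t h1 h2
    rw [qdigit_nat r ℓ t h2, qdigit_nat (r + 1) ℓ t h2]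
    have : ((r / 2 ^ (ℓ - t)) % 2 ≠ ((r + 1) / 2 ^ (ℓ - t)) % 2) ↔ 2 ^ (ℓ - t) ∣ (r + 1) :=
      nat_digit_diff (ℓ - t) r
    rw [Ne, ← Nat.cast_inj (R := ℤ)] at this
    rw [Ne, this, padicValNat_dvd_iff_le (by omega)]
  rw [leastChange, hmap]
  rw [find?_range' _ ℓ 1 (ℓ - v) (by omega) (by omega)
    (by simp only [decide_eq_true_eq]; rw [hdig (ℓ - v) (by omega) (by omega)]; omega)
    (fun t ht1 ht2 => by
      simp only [decide_eq_false_iff_not, Decidable.not_not]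
      have := hdig t ht1 (by omega)
      by_contra hne
      rw [← Ne] at hne
      have := this.1 hne
      omega)]
  rfl

-- α/β values of the load process

lemma load_ab (h : ℕ → ℕ) (ℓ : ℕ) : ∀ s, (load h ℓ s).1 = ((s / 2 : ℕ) : ℚ) / 2 ^ ℓ ∧
    (load h ℓ s).2.1 = (((s + 1) / 2 : ℕ) : ℚ) / 2 ^ ℓ := by
  have hpow : (2 : ℚ) ^ (-(ℓ : ℤ)) = ((2 : ℚ) ^ ℓ)⁻¹ := by
    rw [zpow_neg, zpow_natCast]
  have hstep : ∀ a : ℕ, ((a : ℚ)) / 2 ^ ℓ + ((2 : ℚ) ^ ℓ)⁻¹ = ((a + 1 : ℕ) : ℚ) / 2 ^ ℓ := by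
    intro a
    push_cast
    field_simp
  intro s
  induction s with
  | zero => simp [load]
  | succ s ih =>
    obtain ⟨ih1, ih2⟩ := ih
    rcases Nat.even_or_odd s with ⟨j, hj⟩ | ⟨j, hj⟩
    · have hmod : s % 2 ≠ 1 := by omega
      simp only [load, if_neg hmod]
      refine ⟨ih1.trans (by congr 2; omega), ?_⟩
      show (load h ℓ s).2.1 + (2 : ℚ) ^ (-(ℓ : ℤ)) = _
      rw [ih2, hpow, hstep]
      congr 2
      omega
    · have hmod : s % 2 = 1 := by omega
      simp only [load, if_pos hmod]
      constructor
      · show (load h ℓ s).1 + (2 : ℚ) ^ (-(ℓ : ℤ)) = _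
        rw [ih1, hpow, hstep]
        congr 2
        omega
      · exact ih2.trans (by congr 2; omega)

lemma load_two_step (h : ℕ → ℕ) (ℓ r : ℕ) (hv : padicValNat 2 (r + 1) + 1 ≤ ℓ) :
    (load h ℓ (2 * r + 2)).2.2
      = gup2 (h (ℓ - padicValNat 2 (r + 1))) ((load h ℓ (2 * r)).2.2) := by
  have hpow : (2 : ℚ) ^ (-(ℓ : ℤ)) = ((2 : ℚ) ^ ℓ)⁻¹ := by
    rw [zpow_neg, zpow_natCast]
  have hstep : ((r : ℚ)) / 2 ^ ℓ + ((2 : ℚ) ^ ℓ)⁻¹ = ((r + 1 : ℕ) : ℚ) / 2 ^ ℓ := by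
    push_cast; field_simp
  have hb : (load h ℓ (2 * r)).2.1 = ((r : ℚ)) / 2 ^ ℓ := by
    rw [(load_ab h ℓ (2 * r)).2]; congr 2; omega
  have ha1 : (load h ℓ (2 * r + 1)).1 = ((r : ℚ)) / 2 ^ ℓ := by
    rw [(load_ab h ℓ (2 * r + 1)).1]; congr 2; omega
  have hmod0 : ¬ ((2 * r) % 2 = 1) := by omega
  have hmod1 : (2 * r + 1) % 2 = 1 := by omega
  have step1 : load h ℓ (2 * r + 1) = ((load h ℓ (2 * r)).1,
      (load h ℓ (2 * r)).2.1 + (2 : ℚ) ^ (-(ℓ : ℤ)),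
      gup (h (leastChange (load h ℓ (2 * r)).2.1
        ((load h ℓ (2 * r)).2.1 + (2 : ℚ) ^ (-(ℓ : ℤ))) ℓ)) (load h ℓ (2 * r)).2.2) := by
    show load h ℓ ((2 * r) + 1) = _
    simp only [load, if_neg hmod0]
  have step2 : load h ℓ (2 * r + 2) = ((load h ℓ (2 * r + 1)).1 + (2 : ℚ) ^ (-(ℓ : ℤ)),
      (load h ℓ (2 * r + 1)).2.1,
      gup (h (leastChange (load h ℓ (2 * r + 1)).1
        ((load h ℓ (2 * r + 1)).1 + (2 : ℚ) ^ (-(ℓ : ℤ))) ℓ)) (load h ℓ (2 * r + 1)).2.2) := by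
    show load h ℓ ((2 * r + 1) + 1) = _
    simp only [load, if_pos hmod1]
  have hlc : ∀ x : ℚ, x = (r : ℚ) / 2 ^ ℓ →
      leastChange x (x + (2 : ℚ) ^ (-(ℓ : ℤ))) ℓ = ℓ - padicValNat 2 (r + 1) := by
    intro x hx
    rw [hx, hpow, hstep]
    exact leastChange_eq r ℓ hv
  have ha0 : (load h ℓ (2 * r)).1 = ((r : ℚ)) / 2 ^ ℓ := by
    rw [(load_ab h ℓ (2 * r)).1]; congr 2; omega
  rw [step2, step1]
  simp only
  rw [hlc _ ha0, hlc _ hb]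
  rfl

lemma padic_odd_pow (q d : ℕ) : padicValNat 2 ((2 * q + 1) * 2 ^ d) = d := by
  have h1 : (2 * q + 1) ≠ 0 := by omega
  have h2 : (2 : ℕ) ^ d ≠ 0 := by positivity
  rw [padicValNat.mul h1 h2, padicValNat.eq_zero_of_not_dvd (by omega), padicValNat.pow 2 d,
    padicValNat_self, Nat.mul_one, Nat.zero_add]

lemma load_run (h : ℕ → ℕ) (ℓ : ℕ) :
    ∀ d, d ≤ ℓ → ∀ q, (load h ℓ (2 * (q * 2 ^ d + 2 ^ d - 1))).2.2
      = runp h ℓ d ((load h ℓ (2 * (q * 2 ^ d))).2.2) := by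
  intro d
  induction d with
  | zero =>
    intro _ q
    have e : q * 2 ^ 0 + 2 ^ 0 - 1 = q * 2 ^ 0 := by omega
    rw [e]
    rfl
  | succ d ih =>
    intro hdl q
    have h2d : 0 < 2 ^ d := by positivity
    have e2 : (2:ℕ) ^ (d + 1) = 2 ^ d * 2 := pow_succ 2 d
    have i1 : 2 * (q * 2 ^ (d + 1) + 2 ^ (d + 1) - 1)
        = 2 * ((2 * q + 1) * 2 ^ d + 2 ^ d - 1) := by
      rw [e2]; ring_nf
    have i2 : 2 * ((2 * q + 1) * 2 ^ d) = 2 * ((2 * q + 1) * 2 ^ d - 1) + 2 := by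
      have : 0 < (2 * q + 1) * 2 ^ d := by positivity
      omega
    have i3 : 2 * ((2 * q + 1) * 2 ^ d - 1) = 2 * ((2 * q) * 2 ^ d + 2 ^ d - 1) := by
      ring_nf
    have i4 : 2 * ((2 * q) * 2 ^ d) = 2 * (q * 2 ^ (d + 1)) := by rw [e2]; ring
    have hv : padicValNat 2 (((2 * q + 1) * 2 ^ d - 1) + 1) + 1 ≤ ℓ := by
      have hpos : 0 < (2 * q + 1) * 2 ^ d := by positivity
      have : ((2 * q + 1) * 2 ^ d - 1) + 1 = (2 * q + 1) * 2 ^ d := by omega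
      rw [this, padic_odd_pow]
      omega
    have key := load_two_step h ℓ ((2 * q + 1) * 2 ^ d - 1) hv
    have hval : ((2 * q + 1) * 2 ^ d - 1) + 1 = (2 * q + 1) * 2 ^ d := by
      have hpos : 0 < (2 * q + 1) * 2 ^ d := by positivity
      omega
    rw [hval, padic_odd_pow] at key
    rw [i1, ih (by omega) (2 * q + 1)]
    show _ = runp h ℓ d (gup2 (h (ℓ - d)) (runp h ℓ d ((load h ℓ (2 * (q * 2 ^ (d + 1)))).2.2)))
    rw [i2, key, i3, ih (by omega) (2 * q), i4]

lemma load_final (h : ℕ → ℕ) (hmono : Monotone h) (ℓ m : ℕ) (hm : m ≤ ℓ) :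
    (load h ℓ (2 * (2 ^ (ℓ - m) - 1))).2.2 = Aseq h ℓ (ℓ - m) := by
  have := load_run h ℓ (ℓ - m) (by omega) 0
  simp only [Nat.zero_mul, Nat.zero_add, Nat.mul_zero] at this
  rw [this]
  show runp h ℓ (ℓ - m) (load h ℓ 0).2.2 = _
  have h0 : (load h ℓ 0).2.2 = 0 := rfl
  rw [h0, runp_zero_eq_Aseq h hmono]

lemma Aseq_nonneg (h : ℕ → ℕ) (ℓ : ℕ) : ∀ d, 0 ≤ Aseq h ℓ d := by
  intro d
  induction d with
  | zero => exact le_refl _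
  | succ d ih =>
    have h1 := trunc_nonneg (Aseq h ℓ d) ih (h (ℓ - d))
    have h2 : (0:ℚ) ≤ 2 / 2 ^ (h (ℓ - d)) := by positivity
    show 0 ≤ Aseq h ℓ d + trunc (Aseq h ℓ d) (h (ℓ - d)) + 2 / 2 ^ (h (ℓ - d))
    linarith

lemma trunc_scale (x : ℚ) (m c : ℕ) :
    (2:ℚ) ^ m * trunc x (m + 1 + c) = trunc ((2:ℚ) ^ (m + 1) * x) c / 2 := by
  rw [trunc, trunc]
  have harg : x * 2 ^ (m + 1 + c) = (2 ^ (m + 1) * x) * 2 ^ c := by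
    rw [pow_add]; ring
  rw [harg]
  have h1 : (2:ℚ) ^ (m + 1 + c) = 2 ^ m * 2 * 2 ^ c := by
    rw [pow_add, pow_succ]
  field_simp
  rw [h1]
  ring

lemma step_trunc (y : ℚ) (hy : 0 ≤ y) (c : ℕ) :
    trunc (y / 2 + trunc y c / 2 + 1 / 2 ^ c) c = trunc y c + 1 / 2 ^ c := by
  set z := ⌊y * 2 ^ c⌋ with hz
  have h0 : trunc y c = (z : ℚ) / 2 ^ c := rfl
  have hle : (z : ℚ) ≤ y * 2 ^ c := Int.floor_le _
  have hlt : y * 2 ^ c < z + 1 := Int.lt_floor_add_one _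
  rw [h0, trunc]
  have harg : (y / 2 + (z : ℚ) / 2 ^ c / 2 + 1 / 2 ^ c) * 2 ^ c = (y * 2 ^ c + z) / 2 + 1 := by
    field_simp
  rw [harg]
  have hfz : ⌊(y * 2 ^ c + (z : ℚ)) / 2 + 1⌋ = z + 1 := by
    rw [Int.floor_eq_iff]
    constructor
    · push_cast
      linarith
    · push_cast
      linarith
  rw [hfz]
  push_cast
  field_simp

lemma trunc_Aseq_step (h : ℕ → ℕ) (ℓ m : ℕ) (hm : m + 1 ≤ ℓ) (cj : ℕ)
    (hh : h (m + 1) = m + 1 + cj) :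
    trunc (2 ^ m * Aseq h ℓ (ℓ - m)) cj
      = trunc (2 ^ (m + 1) * Aseq h ℓ (ℓ - (m + 1))) cj + 1 / 2 ^ cj := by
  set d := ℓ - (m + 1) with hddef
  have hd : ℓ - m = d + 1 := by omega
  have hld : ℓ - d = m + 1 := by omega
  rw [hd]
  have hA : Aseq h ℓ (d + 1) = Aseq h ℓ d + trunc (Aseq h ℓ d) (m + 1 + cj)
      + 2 / 2 ^ (m + 1 + cj) := by
    show Aseq h ℓ d + trunc (Aseq h ℓ d) (h (ℓ - d)) + 2 / 2 ^ (h (ℓ - d)) = _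
    rw [hld, hh]
  rw [hA]
  set y := (2:ℚ) ^ (m + 1) * Aseq h ℓ d with hy
  have hy0 : 0 ≤ y := by
    have := Aseq_nonneg h ℓ d
    positivity
  have expand : (2:ℚ) ^ m * (Aseq h ℓ d + trunc (Aseq h ℓ d) (m + 1 + cj) + 2 / 2 ^ (m + 1 + cj))
      = y / 2 + trunc y cj / 2 + 1 / 2 ^ cj := by
    rw [mul_add, mul_add, trunc_scale]
    have e1 : (2:ℚ) ^ m * Aseq h ℓ d = y / 2 := by
      rw [hy, pow_succ]; ring
    have e2 : (2:ℚ) ^ m * (2 / 2 ^ (m + 1 + cj)) = 1 / 2 ^ cj := by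
      rw [pow_add, pow_succ]
      field_simp
    rw [e1, e2]
  rw [expand, step_trunc y hy0 cj]

lemma key_lemma (g c n : ℕ → ℕ) (hsig : IsSignature g c n) (k : ℕ) :
    ∀ t, t ≤ k → ∀ m, n (k - t) ≤ m + 1 → m + 1 ≤ n (k - t + 1) →
    trunc (2 ^ m * Aseq (fun x => x + g x) (n (k + 1) - 1) ((n (k + 1) - 1) - m)) (c (k - t))
      = (if t = 0 then 0 else truncS c (fun j => n (j + 1) - n j) k (t - 1))
        + ((n (k - t + 1) - 1 - m : ℕ) : ℚ) / 2 ^ (c (k - t)) := by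
  obtain ⟨hn0, hnmono, hcmono, hval⟩ := hsig
  set h : ℕ → ℕ := fun x => x + g x with hhdef
  set ℓ : ℕ := n (k + 1) - 1 with hldef
  have hnpos : ∀ j, 0 < j → 0 < n j := by
    intro j hj
    have := hnmono (show 0 < j from hj)
    omega
  have hℓ : ℓ + 1 = n (k + 1) := by
    have := hnpos (k + 1) (by omega)
    omega
  -- the inner step, shared
  have hstep : ∀ j m, n j ≤ m + 1 → m + 1 < n (j + 1) → j ≤ k →
      trunc (2 ^ m * Aseq h ℓ (ℓ - m)) (c j)
        = trunc (2 ^ (m + 1) * Aseq h ℓ (ℓ - (m + 1))) (c j) + 1 / 2 ^ (c j) := by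
    intro j m hj1 hj2 hjk
    have hml : m + 1 ≤ ℓ := by
      have := hnmono.monotone (show j + 1 ≤ k + 1 by omega)
      omega
    refine trunc_Aseq_step h ℓ m hml (c j) ?_
    show (m + 1) + g (m + 1) = m + 1 + c j
    rw [hval j (m + 1) hj1 hj2]
  intro t
  induction t with
  | zero =>
    intro _
    -- downward induction on m within interval k
    have inner : ∀ δ m, m + 1 + δ = n (k + 1) → n k ≤ m + 1 →
        trunc (2 ^ m * Aseq h ℓ (ℓ - m)) (c k)
          = ((n (k + 1) - 1 - m : ℕ) : ℚ) / 2 ^ (c k) := by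
      intro δ
      induction δ with
      | zero =>
        intro m hm _
        have hmℓ : m = ℓ := by omega
        subst hmℓ
        have h0 : ℓ - ℓ = 0 := by omega
        rw [h0]
        show trunc (2 ^ ℓ * Aseq h ℓ 0) (c k) = _
        have : (2:ℚ) ^ ℓ * Aseq h ℓ 0 = 0 := by
          show (2:ℚ) ^ ℓ * 0 = 0
          ring
        rw [this, trunc]
        simp [Int.floor_eq_iff]
      | succ δ ihδ =>
        intro m hm hnk
        have hprev := ihδ (m + 1) (by omega) (by omega)
        rw [hstep k m hnk (by omega) le_rfl, hprev]
        have hcast : (n (k + 1) - 1 - m : ℕ) = (n (k + 1) - 1 - (m + 1) : ℕ) + 1 := by omega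
        rw [hcast]
        push_cast
        ring
    intro m hm1 hm2
    simp only [Nat.sub_zero] at hm1 hm2 ⊢
    rw [if_pos trivial, zero_add]
    exact inner (n (k + 1) - (m + 1)) m (by omega) hm1
  | succ t iht =>
    intro htk
    have htk' : t ≤ k := by omega
    have hkt : 1 ≤ k - t := by omega
    have hidx : k - (t + 1) + 1 = k - t := by omega
    have hidx2 : k - (t + 1) = k - t - 1 := by omega
    -- base case: m + 1 = n (k - t)
    have hbase : trunc (2 ^ (n (k - t) - 1) * Aseq h ℓ (ℓ - (n (k - t) - 1))) (c (k - (t + 1)))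
        = truncS c (fun j => n (j + 1) - n j) k t := by
      have hnktpos : 0 < n (k - t) := hnpos _ (by omega)
      have hm0 : n (k - t) - 1 + 1 = n (k - t) := by omega
      have hprev := iht htk' (n (k - t) - 1) (by omega)
        (by rw [hm0]; exact hnmono.monotone (by omega))
      set X := 2 ^ (n (k - t) - 1) * Aseq h ℓ (ℓ - (n (k - t) - 1)) with hX
      have hX0 : 0 ≤ X := by
        have := Aseq_nonneg h ℓ (ℓ - (n (k - t) - 1))
        positivity
      have htower : trunc X (c (k - (t + 1))) = trunc (trunc X (c (k - t))) (c (k - (t + 1))) :=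
        (trunc_trunc X hX0 (hcmono.monotone (by omega))).symm
      rw [htower, hprev]
      have hsz : ((n (k - t + 1) - 1 - (n (k - t) - 1) : ℕ) : ℚ)
          = ((n (k - t + 1) - n (k - t) : ℕ) : ℚ) := by
        congr 1
        omega
      rw [hsz]
      -- now unfold truncS
      rcases Nat.eq_zero_or_pos t with rfl | htpos
      · rw [if_pos rfl, zero_add]
        show trunc (((n (k - 0 + 1) - n (k - 0) : ℕ) : ℚ) / 2 ^ (c (k - 0))) (c (k - 1)) = _
        simp only [Nat.sub_zero]
        rfl
      · obtain ⟨i, rfl⟩ : ∃ i, t = i + 1 := ⟨t - 1, by omega⟩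
        rw [if_neg (by omega)]
        show trunc (truncS c (fun j => n (j + 1) - n j) k (i + 1 - 1)
            + ((n (k - (i + 1) + 1) - n (k - (i + 1)) : ℕ) : ℚ) / 2 ^ (c (k - (i + 1))))
            (c (k - (i + 1 + 1))) = truncS c (fun j => n (j + 1) - n j) k (i + 1)
        have hi1 : i + 1 - 1 = i := by omega
        have hi2 : k - (i + 1 + 1) = k - (i + 1) - 1 := by omega
        rw [hi1, hi2, add_comm]
        rfl
    -- downward induction within interval k - (t+1)
    have inner : ∀ δ m, m + 1 + δ = n (k - t) → n (k - (t + 1)) ≤ m + 1 →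
        trunc (2 ^ m * Aseq h ℓ (ℓ - m)) (c (k - (t + 1)))
          = truncS c (fun j => n (j + 1) - n j) k t
            + ((n (k - (t + 1) + 1) - 1 - m : ℕ) : ℚ) / 2 ^ (c (k - (t + 1))) := by
      intro δ
      induction δ with
      | zero =>
        intro m hm _
        have hmeq : m = n (k - t) - 1 := by
          have := hnpos (k - t) (by omega)
          omega
        subst hmeq
        rw [hbase]
        have : (n (k - (t + 1) + 1) - 1 - (n (k - t) - 1) : ℕ) = 0 := by
          rw [hidx]
          omega
        rw [this]
        push_cast
        ring
      | succ δ ihδ =>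
        intro m hm hnk
        have hprev := ihδ (m + 1) (by omega) (by omega)
        rw [hstep (k - (t + 1)) m hnk (by rw [hidx]; omega) (by omega), hprev]
        have hcast : (n (k - (t + 1) + 1) - 1 - m : ℕ)
            = (n (k - (t + 1) + 1) - 1 - (m + 1) : ℕ) + 1 := by
          rw [hidx]
          have := hnpos (k - t) (by omega)
          omega
        rw [hcast]
        push_cast
        ring
    intro m hm1 hm2
    rw [if_neg (by omega)]
    have ht1 : t + 1 - 1 = t := by omega
    rw [ht1]
    exact inner (n (k - t) - (m + 1)) m (by rw [hidx] at hm2; omega) hm1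

lemma ones_div_mod (w e : ℕ) (he : e < w) : ((2 ^ w - 1) / 2 ^ e) % 2 = 1 := by
  have h2e : 0 < (2:ℕ) ^ e := by positivity
  have hwe : 0 < (2:ℕ) ^ (w - e) := by positivity
  have hw : (2:ℕ) ^ w = 2 ^ e * 2 ^ (w - e) := by
    rw [← pow_add]
    congr 1
    omega
  obtain ⟨X, hX⟩ : ∃ X, 2 ^ (w - e) = X + 1 := ⟨2 ^ (w - e) - 1, by omega⟩
  have hmul : 2 ^ e * (X + 1) = 2 ^ e * X + 2 ^ e := by ring
  have hN : 2 ^ w - 1 = 2 ^ e * X + (2 ^ e - 1) := by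
    rw [hw, hX, hmul]
    omega
  have hdiv : (2 ^ w - 1) / 2 ^ e = X := by
    rw [hN, Nat.mul_add_div h2e, Nat.div_eq_of_lt (by omega)]
    omega
  rw [hdiv]
  obtain ⟨Y, hY⟩ : ∃ Y, 2 ^ (w - e) = 2 * Y := ⟨2 ^ (w - e - 1), by
    rw [← pow_succ']
    congr 1
    omega⟩
  omega

lemma loadDone_final (h : ℕ → ℕ) (ℓ m : ℕ) (hm : m < ℓ) :
    loadDone h m ℓ (2 * (2 ^ (ℓ - m) - 1)) := by
  intro t h1 h2
  have hN : 0 < 2 ^ (ℓ - m) := by positivity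
  set N := 2 ^ (ℓ - m) - 1 with hNdef
  have hdig : ∀ a : ℕ, a = N → qdigit ((a : ℚ) / 2 ^ ℓ) t = 1 := by
    rintro a rfl
    rw [qdigit_nat _ _ _ h2]
    have : (N / 2 ^ (ℓ - t)) % 2 = 1 := by
      rw [hNdef]
      exact ones_div_mod (ℓ - m) (ℓ - t) (by omega)
    rw [this]
    rfl
  constructor
  · rw [(load_ab h ℓ (2 * N)).1]
    exact hdig _ (by omega)
  · rw [(load_ab h ℓ (2 * N)).2]
    exact hdig _ (by omega)

lemma zero_bit : ∀ w r : ℕ, r < 2 ^ w - 1 → ∃ e, e < w ∧ (r / 2 ^ e) % 2 = 0 := by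
  intro w
  induction w with
  | zero => intro r hr; omega
  | succ w ih =>
    intro r hr
    rcases Nat.even_or_odd r with ⟨j, hj⟩ | ⟨j, hj⟩
    · exact ⟨0, by omega, by rw [pow_zero, Nat.div_one]; omega⟩
    · have hps : (2:ℕ) ^ (w + 1) = 2 * 2 ^ w := by rw [pow_succ']
      have hj' : j < 2 ^ w - 1 := by omega
      obtain ⟨e, he, hz⟩ := ih j hj'
      refine ⟨e + 1, by omega, ?_⟩
      have : r / 2 ^ (e + 1) = j / 2 ^ e := by
        rw [pow_succ']
        rw [← Nat.div_div_eq_div_mul]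
        congr 1
        omega
      rw [this]
      exact hz

lemma loadDone_not (h : ℕ → ℕ) (ℓ m u : ℕ) (hm : m < ℓ)
    (hu : u < 2 * (2 ^ (ℓ - m) - 1)) : ¬ loadDone h m ℓ u := by
  intro hdone
  have hr : u / 2 < 2 ^ (ℓ - m) - 1 := by omega
  obtain ⟨e, he, hz⟩ := zero_bit (ℓ - m) (u / 2) hr
  have ht1 : m < ℓ - e := by omega
  have ht2 : ℓ - e ≤ ℓ := by omega
  have hd := (hdone (ℓ - e) ht1 ht2).1
  rw [(load_ab h ℓ u).1, qdigit_nat _ _ _ ht2] at hd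
  have hee : ℓ - (ℓ - e) = e := by omega
  rw [hee, hz] at hd
  exact absurd hd (by norm_num)

/-- Let `g` be nondecreasing computable with infinite signature `(c j, I j)` where
`I j = [n j, n (j+1))`, let `h x = x + g x` and `t ≤ k`. If `m` is an element of
`I (k-t)` smaller than `max I (k-t)`, or the largest integer less than all elements of
`I (k-t)` (equivalently, `m + 1 ∈ I (k-t)`), then the `h`-load process on the interval
`(m, max I k]` terminates and its final value `γ` satisfies
`T(2^m·γ, c (k-t)) = S_k (t-1) + (max I (k-t) - m)·2^(-c (k-t))`, with `S_k (-1) = 0`. -/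
theorem stmt18 (g c n : ℕ → ℕ) (hgmono : Monotone g) (hgcomp : Computable g)
    (hsig : IsSignature g c n) (k t m : ℕ) (htk : t ≤ k)
    (hm1 : n (k - t) ≤ m + 1) (hm2 : m + 1 < n (k - t + 1)) :
    ∃ s, loadDone (fun x => x + g x) m (n (k + 1) - 1) s ∧
      (∀ u < s, ¬ loadDone (fun x => x + g x) m (n (k + 1) - 1) u) ∧
      trunc (2 ^ m * (load (fun x => x + g x) (n (k + 1) - 1) s).2.2) (c (k - t)) =
        (if t = 0 then 0 else truncS c (fun j => n (j + 1) - n j) k (t - 1)) +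
          ((n (k - t + 1) - 1 - m : ℕ) : ℚ) / 2 ^ c (k - t) := by
  obtain ⟨hn0, hnmono, hcmono, hval⟩ := hsig
  set ℓ : ℕ := n (k + 1) - 1 with hldef
  have hℓ : ℓ + 1 = n (k + 1) := by
    have := hnmono (show 0 < k + 1 by omega)
    omega
  have hmono : n (k - t + 1) ≤ n (k + 1) := hnmono.monotone (by omega)
  have hmlt : m < ℓ := by omega
  have hhm : Monotone (fun x => x + g x) := fun a b hab => Nat.add_le_add hab (hgmono hab)
  refine ⟨2 * (2 ^ (ℓ - m) - 1), loadDone_final _ ℓ m hmlt,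
    fun u hu => loadDone_not _ ℓ m u hmlt hu, ?_⟩
  rw [load_final _ hhm ℓ m (by omega)]
  exact key_lemma g c n ⟨hn0, hnmono, hcmono, hval⟩ k t htk m hm1 (by omega)
end

section
/- Let g : ℕ → ℕ be a nondecreasing computable function with infinite signature (c_j, I_j)_{j≥0}, let h(x) = x + g(x), let t < k, and let m be the largest integer less than all elements of I = ⋃_{j∈[k−t,k]} I_j (so m = min I_{k−t} − 1, assumed ≥ 0). Then the h-load process on the interval (m, max I_k] terminates, and its final value γ satisfies γ ≥ 2^{−m}·S_k(t). -/
namespace Aux19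
lemma two_pow_pos (c : ℕ) : (0:ℚ) < 2 ^ c := by positivity

lemma floor_mul_nat (y : ℚ) (N : ℕ) (hN : 0 < N) : ⌊y * N⌋ / (N:ℤ) = ⌊y⌋ := by
  have hN' : (0:ℚ) < (N:ℚ) := by exact_mod_cast hN
  apply le_antisymm
  · rw [Int.le_floor]
    have h1 : (⌊y * N⌋ / (N:ℤ)) * (N:ℤ) ≤ ⌊y * N⌋ := Int.ediv_mul_le _ (by exact_mod_cast hN.ne')
    have h2 : (⌊y * N⌋ : ℚ) ≤ y * N := Int.floor_le _
    have h3 : ((⌊y * N⌋ / (N:ℤ) * (N:ℤ) : ℤ) : ℚ) ≤ y * N := le_trans (by exact_mod_cast h1) h2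
    push_cast at h3
    calc ((⌊y * N⌋ / (N:ℤ) : ℤ) : ℚ) = (⌊y * N⌋ / (N:ℤ) : ℤ) * N / N := by field_simp
    _ ≤ y * N / N := div_le_div_of_nonneg_right h3 hN'.le
    _ = y := by field_simp
  · rw [Int.le_ediv_iff_mul_le (by exact_mod_cast hN), Int.le_floor]
    push_cast
    exact mul_le_mul_of_nonneg_right (Int.floor_le y) hN'.le

lemma trunc_le (x : ℚ) (c : ℕ) : trunc x c ≤ x := by
  rw [trunc, div_le_iff₀ (two_pow_pos c)]
  exact Int.floor_le _

lemma trunc_mono {x y : ℚ} (c : ℕ) (h : x ≤ y) : trunc x c ≤ trunc y c := by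
  apply div_le_div_of_nonneg_right _ (two_pow_pos c).le
  exact_mod_cast Int.floor_le_floor (mul_le_mul_of_nonneg_right h (two_pow_pos c).le)

lemma trunc_trunc (x : ℚ) {c c' : ℕ} (h : c' ≤ c) : trunc (trunc x c) c' = trunc x c' := by
  have hd : c = c' + (c - c') := by omega
  have key : ⌊trunc x c * 2 ^ c'⌋ = ⌊x * 2 ^ c'⌋ := by
    have e1 : trunc x c * 2 ^ c' = (⌊x * 2 ^ c⌋ : ℚ) / (2 ^ (c - c') : ℕ) := by
      rw [trunc]; push_cast
      rw [hd, pow_add]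
      field_simp
      rw [Nat.add_sub_cancel_left, mul_comm]
    rw [e1, Rat.floor_intCast_div_natCast]
    rw [← floor_mul_nat (x * 2 ^ c') (2 ^ (c - c')) (by positivity)]
    congr 2
    push_cast
    rw [mul_assoc, ← pow_add, ← hd]
  rw [trunc, trunc, show (⌊x*2^c⌋:ℚ)/2^c = trunc x c from rfl, key]; rfl

/-- if `z/2^c ≤ x` then `z/2^c ≤ trunc x c` -/
lemma le_trunc {z : ℤ} {x : ℚ} {c : ℕ} (h : (z:ℚ) / 2 ^ c ≤ x) : (z:ℚ) / 2 ^ c ≤ trunc x c := by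
  rw [trunc, div_le_div_iff_of_pos_right (two_pow_pos c)]
  rw [div_le_iff₀ (two_pow_pos c)] at h
  exact_mod_cast Int.le_floor.2 (by exact_mod_cast h)

lemma trunc_nonneg {x : ℚ} (c : ℕ) (h : 0 ≤ x) : 0 ≤ trunc x c := by
  have : ((0:ℤ):ℚ)/2^c ≤ trunc x c := le_trunc (by simpa using h)
  simpa using this

def tau (g : ℕ → ℕ) (ℓ : ℕ) : ℕ → ℚ
  | 0 => 0
  | i + 1 => tau g ℓ i / 2 + ((⌊tau g ℓ i * 2 ^ g (ℓ - i)⌋ : ℚ) + 2) / 2 ^ (g (ℓ - i) + 1)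

lemma tau_succ_ge (g : ℕ → ℕ) (ℓ i : ℕ) :
    trunc (tau g ℓ i) (g (ℓ - i)) + 1 / 2 ^ (g (ℓ - i)) ≤ tau g ℓ (i + 1) := by
  set c := g (ℓ - i)
  set τ := tau g ℓ i with hτ
  have hF : (⌊τ * 2 ^ c⌋ : ℚ) / 2 ^ c ≤ τ := trunc_le τ c
  have e1 : ((⌊τ * 2 ^ c⌋ : ℚ) + 2) / 2 ^ (c + 1)
      = ((⌊τ * 2 ^ c⌋ : ℚ) / 2 ^ c) / 2 + 1 / 2 ^ c := by
    rw [pow_succ]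
    field_simp
  show trunc τ c + 1 / 2 ^ c ≤ τ / 2 + ((⌊τ * 2 ^ c⌋ : ℚ) + 2) / 2 ^ (c + 1)
  rw [e1, trunc]
  linarith

lemma interval_step (g : ℕ → ℕ) (ℓ cj a b : ℕ) (ha : 1 ≤ a) (hb : b ≤ ℓ + 1)
    (hg : ∀ x, a ≤ x → x < b → g x = cj) :
    ∀ d, d ≤ b - a →
      trunc (tau g ℓ (ℓ + 1 - b)) cj + d / 2 ^ cj ≤ trunc (tau g ℓ (ℓ + 1 - (b - d))) cj := by
  intro d
  induction d with
  | zero => intro _; simp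
  | succ d ih =>
    intro hd
    have hd' : d ≤ b - a := by omega
    have IH := ih hd'
    set p := b - (d + 1) with hp
    have hap : a ≤ p := by omega
    have hpb : p + 1 = b - d := by omega
    have hpl : p ≤ ℓ := by omega
    have hi1 : ℓ + 1 - (p + 1) = ℓ - p := by omega
    have hgp : g (ℓ - (ℓ - p)) = cj := by
      rw [show ℓ - (ℓ - p) = p by omega]
      exact hg p hap (by omega)
    have key := tau_succ_ge g ℓ (ℓ - p)
    rw [hgp] at key
    have hstep : ℓ + 1 - p = (ℓ - p) + 1 := by omega
    have e2 : tau g ℓ (ℓ - p) = tau g ℓ (ℓ + 1 - (b - d)) := by rw [← hpb, hi1]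
    rw [e2] at key
    -- key : trunc (tau (ℓ+1-(b-d))) cj + 1/2^cj ≤ tau (ℓ+1-p) (after rw hstep)
    have hgoal : trunc (tau g ℓ (ℓ + 1 - b)) cj + (d + 1 : ℕ) / 2 ^ cj
        ≤ trunc (tau g ℓ ((ℓ - p) + 1)) cj := by
      have hbig : trunc (tau g ℓ (ℓ + 1 - b)) cj + (d + 1 : ℕ) / 2 ^ cj
          ≤ tau g ℓ ((ℓ - p) + 1) := by
        push_cast
        have : ((d:ℚ)+1)/2^cj = d/2^cj + 1/2^cj := by ring
        linarith
      have hform : trunc (tau g ℓ (ℓ + 1 - b)) cj + (d + 1 : ℕ) / 2 ^ cj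
          = ((⌊tau g ℓ (ℓ + 1 - b) * 2 ^ cj⌋ + (d + 1 : ℕ) : ℤ) : ℚ) / 2 ^ cj := by
        rw [trunc]
        push_cast
        ring
      rw [hform] at hbig ⊢
      exact le_trunc hbig
    rw [show ℓ + 1 - (b - (d+1)) = (ℓ - p) + 1 by omega]
    exact hgoal

def QQ (c : ℕ → ℕ) (sz : ℕ → ℕ) (k : ℕ) : ℕ → ℚ
  | 0 => (sz k : ℚ) / 2 ^ c k
  | i + 1 => (sz (k - (i + 1)) : ℚ) / 2 ^ c (k - (i + 1)) + truncS c sz k i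

lemma truncS_eq_trunc_QQ (c : ℕ → ℕ) (sz : ℕ → ℕ) (k i : ℕ) :
    truncS c sz k i = trunc (QQ c sz k i) (c (k - i - 1)) := by
  cases i <;> rfl

lemma tau_ge_truncS (g c n : ℕ → ℕ) (hn : StrictMono n) (hc : StrictMono c)
    (hsig : ∀ j x, n j ≤ x → x < n (j + 1) → g x = c j) (k t : ℕ) (htk : t < k)
    (ℓ : ℕ) (hℓ : ℓ + 1 = n (k + 1)) :
    truncS c (fun j => n (j + 1) - n j) k t ≤ tau g ℓ (ℓ + 1 - n (k - t)) := by
  set sz : ℕ → ℕ := fun j => n (j + 1) - n j with hsz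
  have hnle : ∀ j, j ≤ n j := fun j => hn.le_apply
  have claim : ∀ i, i ≤ t →
      QQ c sz k i ≤ trunc (tau g ℓ (ℓ + 1 - n (k - i))) (c (k - i)) := by
    intro i
    induction i with
    | zero =>
      intro _
      have hk1 : 1 ≤ n k := le_trans (by omega) (hnle k)
      have h1 := interval_step g ℓ (c k) (n k) (n (k + 1)) hk1 (le_of_eq hℓ.symm)
        (hsig k) (n (k + 1) - n k) le_rfl
      have e0 : ℓ + 1 - n (k + 1) = 0 := by omega
      have e1 : n (k + 1) - (n (k + 1) - n k) = n k := by
        have := hn (show k < k + 1 by omega)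
        omega
      rw [e0, e1] at h1
      have e2 : trunc (tau g ℓ 0) (c k) = 0 := by
        show trunc 0 (c k) = 0
        rw [trunc]
        norm_num
      rw [e2, zero_add] at h1
      simpa [QQ] using h1
    | succ i ih =>
      intro hit
      have IH := ih (by omega)
      set j := k - (i + 1) with hj
      have hji : j + 1 = k - i := by omega
      have hj1 : 1 ≤ j := by omega
      have h1 : truncS c sz k i ≤ trunc (tau g ℓ (ℓ + 1 - n (k - i))) (c j) := by
        rw [truncS_eq_trunc_QQ]
        rw [show k - i - 1 = j by omega]
        calc trunc (QQ c sz k i) (c j)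
            ≤ trunc (trunc (tau g ℓ (ℓ + 1 - n (k - i))) (c (k - i))) (c j) :=
              trunc_mono _ IH
          _ = trunc (tau g ℓ (ℓ + 1 - n (k - i))) (c j) :=
              trunc_trunc _ (le_of_lt (hc (show j < k - i by omega)))
      have hb : n (j + 1) ≤ ℓ + 1 := by
        rw [hℓ]
        exact hn.monotone (by omega)
      have h2 := interval_step g ℓ (c j) (n j) (n (j + 1)) (le_trans hj1 (hnle j)) hb
        (hsig j) (n (j + 1) - n j) le_rfl
      have e1 : n (j + 1) - (n (j + 1) - n j) = n j := by
        have := hn (show j < j + 1 by omega)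
        omega
      rw [e1, hji] at h2
      show (sz j : ℚ) / 2 ^ c j + truncS c sz k i ≤ trunc (tau g ℓ (ℓ + 1 - n j)) (c j)
      calc (sz j : ℚ) / 2 ^ c j + truncS c sz k i
          ≤ (sz j : ℚ) / 2 ^ c j + trunc (tau g ℓ (ℓ + 1 - n (k - i))) (c j) := by linarith
        _ ≤ trunc (tau g ℓ (ℓ + 1 - n j)) (c j) := by
            have e3 : n (k - i) - n j = sz j := by
              show n (k - i) - n j = n (j + 1) - n j
              rw [hji]
            rw [e3] at h2
            linarith
  have final := claim t le_rfl
  calc truncS c sz k t = trunc (QQ c sz k t) (c (k - t - 1)) := truncS_eq_trunc_QQ c sz k t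
    _ ≤ QQ c sz k t := trunc_le _ _
    _ ≤ trunc (tau g ℓ (ℓ + 1 - n (k - t))) (c (k - t)) := final
    _ ≤ tau g ℓ (ℓ + 1 - n (k - t)) := trunc_le _ _

def pat (h : ℕ → ℕ) (ℓ : ℕ) : ℕ → ℚ → ℚ
  | 0, γ => γ
  | L + 1, γ => pat h ℓ L (gup (h (ℓ - L)) (gup (h (ℓ - L)) (pat h ℓ L γ)))

def pval (h : ℕ → ℕ) (ℓ : ℕ) : ℕ → ℚ
  | 0 => 0
  | L + 1 => pval h ℓ L + ((⌊(2:ℚ) ^ h (ℓ - L) * pval h ℓ L⌋ : ℚ) + 2) / 2 ^ h (ℓ - L)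

/-- γ is an integer multiple of 2^(-u) -/
def Mul (u : ℕ) (γ : ℚ) : Prop := ∃ z : ℤ, γ = (z : ℚ) / 2 ^ u

lemma Mul.mono {u u' : ℕ} (h : u ≤ u') {γ : ℚ} (hγ : Mul u γ) : Mul u' γ := by
  obtain ⟨z, rfl⟩ := hγ
  refine ⟨z * 2 ^ (u' - u), ?_⟩
  push_cast
  rw [div_eq_div_iff (two_pow_pos u).ne' (two_pow_pos u').ne', mul_assoc, ← pow_add]
  congr 2
  omega

lemma gup_mul (u : ℕ) (γ : ℚ) : Mul u (gup u γ) := ⟨⌊(2:ℚ)^u * γ⌋ + 1, by push_cast [gup]; ring⟩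

lemma gup_int_add (u : ℕ) (z : ℤ) (x : ℚ) :
    gup u ((z : ℚ) / 2 ^ u + x) = (z : ℚ) / 2 ^ u + gup u x := by
  rw [gup, gup]
  have e1 : (2:ℚ) ^ u * ((z : ℚ) / 2 ^ u + x) = (z:ℚ) + 2 ^ u * x := by
    field_simp
  rw [e1, Int.floor_intCast_add]
  push_cast
  field_simp
  ring

lemma gup_add_of_mul {u : ℕ} {γ : ℚ} (hγ : Mul u γ) (x : ℚ) :
    gup u (γ + x) = γ + gup u x := by
  obtain ⟨z, rfl⟩ := hγ
  exact gup_int_add u z x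

lemma gup_gup (u : ℕ) (γ : ℚ) : gup u (gup u γ) = ((⌊(2:ℚ)^u * γ⌋ : ℚ) + 2) / 2 ^ u := by
  rw [gup, gup]
  have e1 : (2:ℚ) ^ u * (((⌊(2:ℚ)^u * γ⌋ : ℚ) + 1) / 2 ^ u) = ((⌊(2:ℚ)^u * γ⌋ + 1 : ℤ) : ℚ) := by
    push_cast
    field_simp
  rw [e1, Int.floor_intCast]
  push_cast
  ring_nf

lemma pat_shift (h : ℕ → ℕ) (ℓ : ℕ) :
    ∀ L (γ x : ℚ), (∀ i, i < L → Mul (h (ℓ - i)) γ) → pat h ℓ L (γ + x) = γ + pat h ℓ L x := by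
  intro L
  induction L with
  | zero => intro γ x _; rfl
  | succ L ih =>
    intro γ x hγ
    have hL : ∀ i, i < L → Mul (h (ℓ - i)) γ := fun i hi => hγ i (by omega)
    show pat h ℓ L (gup (h (ℓ - L)) (gup (h (ℓ - L)) (pat h ℓ L (γ + x))))
        = γ + pat h ℓ L (gup (h (ℓ - L)) (gup (h (ℓ - L)) (pat h ℓ L x)))
    rw [ih γ x hL]
    rw [gup_add_of_mul (hγ L (by omega)), gup_add_of_mul (hγ L (by omega)), ih γ _ hL]

lemma pat_zero_eq_pval (h : ℕ → ℕ) (hmono : Monotone h) (ℓ : ℕ) :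
    ∀ L, pat h ℓ L 0 = pval h ℓ L := by
  intro L
  induction L with
  | zero => rfl
  | succ L ih =>
    show pat h ℓ L (gup (h (ℓ - L)) (gup (h (ℓ - L)) (pat h ℓ L 0))) = pval h ℓ (L + 1)
    rw [ih, gup_gup]
    set w : ℚ := ((⌊(2:ℚ) ^ h (ℓ - L) * pval h ℓ L⌋ : ℚ) + 2) / 2 ^ h (ℓ - L) with hw
    have hwmul : Mul (h (ℓ - L)) w := ⟨⌊(2:ℚ) ^ h (ℓ - L) * pval h ℓ L⌋ + 2, by push_cast [hw]; ring⟩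
    have hsh : pat h ℓ L (w + 0) = w + pat h ℓ L 0 :=
      pat_shift h ℓ L w 0 (fun i hi => hwmul.mono (hmono (by omega)))
    rw [add_zero] at hsh
    rw [hsh, ih, pval]
    ring

lemma tau_eq_pval (g : ℕ → ℕ) (ℓ : ℕ) :
    ∀ i, i ≤ ℓ → tau g ℓ i = pval (fun x => x + g x) ℓ i * 2 ^ (ℓ - i) := by
  intro i
  induction i with
  | zero => intro _; simp [tau, pval]
  | succ i ih =>
    intro hi
    have IH := ih (by omega)
    obtain ⟨p, hp⟩ : ∃ p, ℓ - i = p := ⟨_, rfl⟩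
    have hp1 : 1 ≤ p := by omega
    show tau g ℓ i / 2 + ((⌊tau g ℓ i * 2 ^ g (ℓ - i)⌋ : ℚ) + 2) / 2 ^ (g (ℓ - i) + 1)
        = (pval (fun x => x + g x) ℓ i
            + ((⌊(2:ℚ) ^ ((ℓ - i) + g (ℓ - i)) * pval (fun x => x + g x) ℓ i⌋ : ℚ) + 2)
              / 2 ^ ((ℓ - i) + g (ℓ - i))) * 2 ^ (ℓ - (i + 1))
    rw [hp] at IH ⊢
    rw [show ℓ - (i + 1) = p - 1 by omega, IH]
    set v := pval (fun x => x + g x) ℓ i with hv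
    rw [show (2:ℚ) ^ (p + g p) * v = v * 2 ^ p * 2 ^ g p by rw [pow_add]; ring]
    have e3 : (2:ℚ) ^ p = 2 ^ (p - 1) * 2 := by
      rw [← pow_succ]
      congr 1
      omega
    have e4 : (2:ℚ) ^ (p + g p) = 2 ^ (p - 1) * 2 ^ (g p + 1) := by
      rw [← pow_add]
      congr 1
      omega
    rw [e4, e3]
    have h1 : (0:ℚ) < 2 ^ (p - 1) := two_pow_pos _
    have h2 : (0:ℚ) < 2 ^ (g p + 1) := two_pow_pos _
    field_simp

lemma qdigit_counter (j ℓ t : ℕ) (ht : t ≤ ℓ) :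
    qdigit ((j:ℚ) * 2 ^ (-(ℓ:ℤ))) t = ((j / 2 ^ (ℓ - t)) % 2 : ℕ) := by
  rw [qdigit]
  have h2 : (2:ℚ) ^ (ℓ - t) * 2 ^ t = 2 ^ ℓ := by
    rw [← pow_add]
    congr 1
    omega
  have e1 : (j:ℚ) * 2 ^ (-(ℓ:ℤ)) * 2 ^ t = ((j:ℤ):ℚ) / ((2 ^ (ℓ - t) : ℕ):ℚ) := by
    push_cast
    rw [zpow_neg, zpow_natCast, eq_div_iff (two_pow_pos (ℓ - t)).ne', mul_assoc, mul_assoc]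
    rw [show (2:ℚ) ^ t * 2 ^ (ℓ - t) = 2 ^ ℓ by rw [← pow_add]; congr 1; omega]
    rw [inv_mul_cancel₀ (two_pow_pos ℓ).ne', mul_one]
  rw [e1, Rat.floor_intCast_div_natCast]
  rw [← Int.natCast_div]
  norm_cast

lemma bits_le {v o b : ℕ} (ho : o % 2 = 1) (hb : b ≤ v) :
    (2 ^ v * o - 1) / 2 ^ b % 2 = (if b = v then 0 else 1) ∧
      (2 ^ v * o) / 2 ^ b % 2 = (if b = v then 1 else 0) := by
  have h2b : 0 < 2 ^ b := Nat.pow_pos (by norm_num)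
  have hvb : 2 ^ v = 2 ^ b * 2 ^ (v - b) := by
    rw [← pow_add]
    congr 1
    omega
  have ho1 : 1 ≤ o := by omega
  obtain ⟨B, hB⟩ : ∃ B, 2 ^ (v - b) * o = B + 1 :=
    ⟨2 ^ (v - b) * o - 1, by
      have : 1 ≤ 2 ^ (v - b) * o := Nat.one_le_iff_ne_zero.2 (by positivity)
      omega⟩
  have hmul : 2 ^ v * o = 2 ^ b * (B + 1) := by rw [hvb, mul_assoc, hB]
  have hdiv1 : (2 ^ v * o) / 2 ^ b = B + 1 := by
    rw [hmul, Nat.mul_div_cancel_left _ h2b]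
  have hdiv2 : (2 ^ v * o - 1) / 2 ^ b = B := by
    have e : 2 ^ v * o - 1 = 2 ^ b * B + (2 ^ b - 1) := by
      rw [hmul, Nat.mul_add, Nat.mul_one]
      omega
    rw [e, Nat.mul_add_div h2b, Nat.div_eq_of_lt (by omega)]
    omega
  rcases Nat.eq_or_lt_of_le hb with heq | hlt
  · have hv0 : v - b = 0 := by omega
    rw [hv0, pow_zero, one_mul] at hB
    rw [hdiv1, hdiv2]
    rw [if_pos heq, if_pos heq]
    omega
  · have : 2 ^ (v - b) = 2 * 2 ^ (v - b - 1) := by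
      rw [← pow_succ']
      congr 1
      omega
    rw [this, mul_assoc] at hB
    rw [hdiv1, hdiv2]
    rw [if_neg (by omega), if_neg (by omega)]
    omega

lemma bits_gt {v o b : ℕ} (ho : o % 2 = 1) (hb : v < b) :
    (2 ^ v * o - 1) / 2 ^ b = (2 ^ v * o) / 2 ^ b := by
  have ho1 : 1 ≤ o := by omega
  have h1 : 1 ≤ 2 ^ v * o := Nat.one_le_iff_ne_zero.2 (by positivity)
  have hnd : ¬ 2 ^ b ∣ 2 ^ v * o := by
    intro hd
    have h2 : 2 ^ v * 2 ∣ 2 ^ v * o := by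
      refine dvd_trans ?_ hd
      rw [← pow_succ]
      exact pow_dvd_pow 2 (by omega)
    have := (Nat.mul_dvd_mul_iff_left (Nat.pow_pos (by norm_num : 0 < 2) : 0 < 2 ^ v)).1 h2
    omega
  have key := @Nat.succ_div (2 ^ v * o - 1) (2 ^ b)
  rw [Nat.sub_add_cancel h1, if_neg hnd, add_zero] at key
  exact key.symm

lemma find?_range' (p : ℕ → Bool) (a : ℕ) (hpa : p a = true) :
    ∀ len s, s ≤ a → a < s + len → (∀ x, s ≤ x → x < a → p x = false) →
      (List.range' s len).find? p = some a := by
  intro len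
  induction len with
  | zero => intro s h1 h2 _; omega
  | succ len ih =>
    intro s h1 h2 hbelow
    rw [List.range'_succ, List.find?_cons]
    rcases Nat.eq_or_lt_of_le h1 with heq | hlt
    · subst heq
      rw [hpa]
    · rw [hbelow s le_rfl hlt]
      exact ih (s + 1) hlt (by omega) (fun x hx1 hx2 => hbelow x (by omega) hx2)

lemma leastChange_eq (ℓ j v o : ℕ) (hdecomp : j + 1 = 2 ^ v * o) (ho : o % 2 = 1)
    (hv : v < ℓ) :
    leastChange ((j:ℚ) * 2 ^ (-(ℓ:ℤ))) (((j:ℚ) + 1) * 2 ^ (-(ℓ:ℤ))) ℓ = ℓ - v := by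
  have hmap : ((List.range ℓ).map (· + 1)) = List.range' 1 ℓ := by
    simp [List.range'_eq_map_range]
    exact fun a _ => by omega
  have hj : j = 2 ^ v * o - 1 := by omega
  have hq' : ((j:ℚ) + 1) = (((j + 1 : ℕ)):ℚ) := by push_cast; ring
  rw [leastChange, hmap, hq']
  have key : (List.range' 1 ℓ).find?
      (fun t => decide (qdigit ((j:ℚ) * 2 ^ (-(ℓ:ℤ))) t ≠ qdigit (((j+1:ℕ):ℚ) * 2 ^ (-(ℓ:ℤ))) t))
      = some (ℓ - v) := by
    apply find?_range'
    · -- digits differ at ℓ - v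
      rw [decide_eq_true_iff]
      have ht : ℓ - v ≤ ℓ := by omega
      rw [qdigit_counter j ℓ _ ht, qdigit_counter (j+1) ℓ _ ht]
      have hb : ℓ - (ℓ - v) = v := by omega
      rw [hb, hj, show 2 ^ v * o - 1 + 1 = 2 ^ v * o by
        have : 1 ≤ 2 ^ v * o := by omega
        omega]
      have h2 := bits_le (o := o) (v := v) (b := v) ho le_rfl
      rw [if_pos rfl, if_pos rfl] at h2
      rw [h2.1, h2.2]
      norm_num
    · omega
    · omega
    · -- digits agree below ℓ - v
      intro x hx1 hx
      rw [decide_eq_false_iff_not, not_not]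
      have hxl : x ≤ ℓ := by omega
      rw [qdigit_counter j ℓ _ hxl, qdigit_counter (j+1) ℓ _ hxl]
      have hbv : v < ℓ - x := by omega
      rw [hj, show 2 ^ v * o - 1 + 1 = 2 ^ v * o by
        have : 1 ≤ 2 ^ v * o := by omega
        omega, bits_gt ho hbv]
  rw [key]
  rfl

lemma load_ab (h : ℕ → ℕ) (ℓ : ℕ) : ∀ s,
    (load h ℓ s).1 = ((s / 2 : ℕ) : ℚ) * 2 ^ (-(ℓ:ℤ)) ∧
      (load h ℓ s).2.1 = (((s + 1) / 2 : ℕ) : ℚ) * 2 ^ (-(ℓ:ℤ)) := by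
  intro s
  induction s with
  | zero => simp [load]
  | succ s ih =>
    rcases Nat.even_or_odd s with he | ho
    · have he' : s % 2 = 0 := Nat.even_iff.1 he
      have hmod : s % 2 ≠ 1 := by omega
      rw [load]
      simp only [if_neg hmod]
      constructor
      · have : (s + 1) / 2 = s / 2 := by omega
        rw [this]
        exact ih.1
      · have h1 : (s + 1 + 1) / 2 = (s + 1) / 2 + 1 := by omega
        show (load h ℓ s).2.1 + (2:ℚ) ^ (-(ℓ:ℤ)) = _
        rw [ih.2, h1]
        push_cast
        ring
    · have hmod : s % 2 = 1 := Nat.odd_iff.1 ho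
      rw [load]
      simp only [if_pos hmod]
      constructor
      · have h1 : (s + 1) / 2 = s / 2 + 1 := by omega
        show (load h ℓ s).1 + (2:ℚ) ^ (-(ℓ:ℤ)) = _
        rw [ih.1, h1]
        push_cast
        ring
      · have h1 : (s + 1 + 1) / 2 = (s + 1) / 2 := by omega
        rw [h1]
        exact ih.2

lemma load_step (h : ℕ → ℕ) (ℓ j v o : ℕ) (γ : ℚ)
    (hdecomp : j + 1 = 2 ^ v * o) (ho : o % 2 = 1) (hv : v < ℓ)
    (hstate : load h ℓ (2 * j) = ((j:ℚ) * 2 ^ (-(ℓ:ℤ)), (j:ℚ) * 2 ^ (-(ℓ:ℤ)), γ)) :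
    load h ℓ (2 * (j + 1)) = (((j:ℚ) + 1) * 2 ^ (-(ℓ:ℤ)), ((j:ℚ) + 1) * 2 ^ (-(ℓ:ℤ)),
      gup (h (ℓ - v)) (gup (h (ℓ - v)) γ)) := by
  have hLC := leastChange_eq ℓ j v o hdecomp ho hv
  have hsum : (j:ℚ) * 2 ^ (-(ℓ:ℤ)) + 2 ^ (-(ℓ:ℤ)) = ((j:ℚ) + 1) * 2 ^ (-(ℓ:ℤ)) := by ring
  have hmod1 : (2 * j) % 2 ≠ 1 := by omega
  have hodd : (2 * j + 1) % 2 = 1 := by omega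
  have step1 : load h ℓ (2 * j + 1)
      = ((j:ℚ) * 2 ^ (-(ℓ:ℤ)), ((j:ℚ) + 1) * 2 ^ (-(ℓ:ℤ)), gup (h (ℓ - v)) γ) := by
    rw [load]
    simp only [if_neg hmod1, hstate]
    rw [hsum, hLC]
  have step2 : load h ℓ (2 * j + 2)
      = (((j:ℚ) + 1) * 2 ^ (-(ℓ:ℤ)), ((j:ℚ) + 1) * 2 ^ (-(ℓ:ℤ)),
          gup (h (ℓ - v)) (gup (h (ℓ - v)) γ)) := by
    show load h ℓ (2 * j + 1 + 1) = _
    rw [load]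
    simp only [if_pos hodd, step1]
    rw [hsum, hLC]
  rw [show 2 * (j + 1) = 2 * j + 2 by ring, step2]

lemma load_run (h : ℕ → ℕ) (ℓ : ℕ) : ∀ L a (γ : ℚ), 2 ^ L ∣ a → a + 2 ^ L ≤ 2 ^ ℓ →
    load h ℓ (2 * a) = ((a:ℚ) * 2 ^ (-(ℓ:ℤ)), (a:ℚ) * 2 ^ (-(ℓ:ℤ)), γ) →
    load h ℓ (2 * (a + (2 ^ L - 1)))
      = (((a + (2 ^ L - 1) : ℕ) : ℚ) * 2 ^ (-(ℓ:ℤ)),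
          ((a + (2 ^ L - 1) : ℕ) : ℚ) * 2 ^ (-(ℓ:ℤ)), pat h ℓ L γ) := by
  intro L
  induction L with
  | zero => intro a γ _ _ h0; simpa [pat] using h0
  | succ L ih =>
    intro a γ hdvd hbound h0
    obtain ⟨b, hb⟩ := hdvd
    have hp1 : 1 ≤ 2 ^ L := Nat.one_le_two_pow
    have hp2 : 2 ^ (L + 1) = 2 * 2 ^ L := by rw [pow_succ]; ring
    have hLℓ : L < ℓ := by
      have h2 : 2 ^ (L + 1) ≤ 2 ^ ℓ := by omega
      have := (Nat.pow_le_pow_iff_right (by norm_num : 1 < 2)).1 h2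
      omega
    -- first half
    have ih1 := ih a γ (dvd_trans (pow_dvd_pow 2 (Nat.le_succ L)) ⟨b, hb⟩) (by omega) h0
    -- middle step at counter j1 = a + 2^L - 1
    set j1 := a + (2 ^ L - 1) with hj1
    have hdecomp : j1 + 1 = 2 ^ L * (2 * b + 1) := by
      rw [hj1, hb]
      rw [hp2]
      ring_nf
      omega
    have hstep := load_step h ℓ j1 L (2 * b + 1) (pat h ℓ L γ) hdecomp (by omega) hLℓ ih1
    have hj2 : j1 + 1 = a + 2 ^ L := by omega
    have hc : ((j1:ℚ) + 1) = ((a + 2 ^ L : ℕ) : ℚ) := by exact_mod_cast congrArg (Nat.cast (R := ℚ)) hj2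
    rw [hj2, hc] at hstep
    have ih2 := ih (a + 2 ^ L) (gup (h (ℓ - L)) (gup (h (ℓ - L)) (pat h ℓ L γ)))
      ⟨2 * b + 1, by omega⟩ (by omega) hstep
    have hfin : a + 2 ^ L + (2 ^ L - 1) = a + (2 ^ (L + 1) - 1) := by omega
    rw [hfin] at ih2
    rw [ih2]
    rfl

end Aux19

/-- Lower bound: let `g` be nondecreasing computable with infinite signature
`(c j, I j)` where `I j = [n j, n (j+1))`, let `h x = x + g x`, `t < k`, and let `m`
be the largest integer less than all elements of `⋃_{j ∈ [k-t, k]} I j`, i.e.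
`m + 1 = n (k - t)`. Then the `h`-load process on `(m, max I k]` terminates and its
final value `γ` satisfies `γ ≥ 2^(-m) · S_k t`. -/
theorem stmt19 (g c n : ℕ → ℕ) (hgmono : Monotone g) (hgcomp : Computable g)
    (hsig : IsSignature g c n) (k t m : ℕ) (htk : t < k)
    (hm : m + 1 = n (k - t)) :
    ∃ s, loadDone (fun x => x + g x) m (n (k + 1) - 1) s ∧
      (∀ u < s, ¬ loadDone (fun x => x + g x) m (n (k + 1) - 1) u) ∧
      (load (fun x => x + g x) (n (k + 1) - 1) s).2.2 ≥
        truncS c (fun j => n (j + 1) - n j) k t / 2 ^ m := by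
  obtain ⟨hn0, hnmono, hcmono, hsig'⟩ := hsig
  set h : ℕ → ℕ := fun x => x + g x with hh
  have hhmono : Monotone h := fun x y hxy => add_le_add hxy (hgmono hxy)
  set ℓ : ℕ := n (k + 1) - 1 with hℓdef
  have hnk1 : k + 1 ≤ n (k + 1) := hnmono.le_apply
  have hℓ : ℓ + 1 = n (k + 1) := by omega
  have hkt1 : 1 ≤ k - t := by omega
  have hnkt : n (k - t) ≤ n k := hnmono.monotone (by omega)
  have hnkk1 : n k < n (k + 1) := hnmono (by omega)
  have hmℓ : m < ℓ := by omega
  set L : ℕ := ℓ - m with hLdef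
  have hL1 : 1 ≤ L := by omega
  have hLℓ : L ≤ ℓ := by omega
  have hJ1 : 1 ≤ 2 ^ L := Nat.one_le_two_pow
  have hrun := Aux19.load_run h ℓ L 0 0 (dvd_zero _)
    (by simpa using Nat.pow_le_pow_right (by norm_num) hLℓ) (by norm_num [load])
  rw [zero_add] at hrun
  refine ⟨2 * (2 ^ L - 1), ?_, ?_, ?_⟩
  · -- loadDone at stage 2 * (2^L - 1)
    intro t' ht1 ht2
    have hb : ℓ - t' < L := by omega
    have hbit : (2 ^ L - 1) / 2 ^ (ℓ - t') % 2 = 1 := by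
      have h2 := (Aux19.bits_le (v := L) (o := 1) (b := ℓ - t') (by norm_num) (by omega)).1
      rw [mul_one, if_neg (by omega)] at h2
      exact h2
    constructor
    · rw [show (load h ℓ (2 * (2 ^ L - 1))).1 = ((2 ^ L - 1 : ℕ) : ℚ) * 2 ^ (-(ℓ:ℤ)) by
        rw [hrun]]
      rw [Aux19.qdigit_counter _ ℓ t' ht2, hbit]
      norm_num
    · rw [show (load h ℓ (2 * (2 ^ L - 1))).2.1 = ((2 ^ L - 1 : ℕ) : ℚ) * 2 ^ (-(ℓ:ℤ)) by
        rw [hrun]]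
      rw [Aux19.qdigit_counter _ ℓ t' ht2, hbit]
      norm_num
  · -- minimality
    intro u hu hdone
    set j' : ℕ := u / 2 with hj'
    have hj'J : j' < 2 ^ L - 1 := by omega
    obtain ⟨v, o, hod, hvo⟩ := Nat.exists_eq_pow_mul_and_not_dvd
      (n := j' + 1) (by omega) 2 (by norm_num)
    have ho : o % 2 = 1 := by
      rcases Nat.mod_two_eq_zero_or_one o with h0 | h1
      · exact absurd (Nat.dvd_of_mod_eq_zero h0) hod
      · exact h1
    have ho1 : 1 ≤ o := by omega
    have hvL : v < L := by
      by_contra hc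
      push_neg at hc
      have h1 : 2 ^ L ≤ 2 ^ v := Nat.pow_le_pow_right (by norm_num) hc
      have h2 : 2 ^ v ≤ 2 ^ v * o := Nat.le_mul_of_pos_right _ (by omega)
      omega
    have ht1 : m < ℓ - v := by omega
    have ht2 : ℓ - v ≤ ℓ := by omega
    have hdigit := (hdone (ℓ - v) ht1 ht2).1
    have hab := (Aux19.load_ab h ℓ u).1
    rw [hab, Aux19.qdigit_counter j' ℓ (ℓ - v) ht2] at hdigit
    rw [show ℓ - (ℓ - v) = v by omega] at hdigit
    have hbit := (Aux19.bits_le (v := v) (o := o) (b := v) ho le_rfl).1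
    rw [if_pos rfl] at hbit
    rw [show j' = 2 ^ v * o - 1 by omega, hbit] at hdigit
    norm_num at hdigit
  · -- the value bound
    have hγ : (load h ℓ (2 * (2 ^ L - 1))).2.2 = Aux19.pat h ℓ L 0 := by rw [hrun]
    rw [hγ, Aux19.pat_zero_eq_pval h hhmono ℓ L]
    have htau : Aux19.tau g ℓ L = Aux19.pval h ℓ L * 2 ^ m := by
      rw [show (2:ℚ) ^ m = 2 ^ (ℓ - L) by congr 1; omega]
      exact Aux19.tau_eq_pval g ℓ L hLℓ
    have hge := Aux19.tau_ge_truncS g c n hnmono hcmono hsig' k t htk ℓ hℓ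
    rw [show ℓ + 1 - n (k - t) = L by omega] at hge
    rw [ge_iff_le, div_le_iff₀ (Aux19.two_pow_pos m), ← htau]
    exact hge
end
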